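/- arXiv:math/0511447 — 7 statements merged into one kernel-verified Lean document; each statement's English description precedes it below -/
import Mathlib

section
/- Let R, A, B, a, b, h, v, T₁, T₂, φ₂, R⁺, ℤR⁺, bars, ε and ∂ be as in the context, with h, v and h∘v having no fixed points, and assume that for every α ∈ A the fiber {s ∈ R : a(s) = α} has at least 3 elements and for every β ∈ B the fiber {s ∈ R : b(s) = β} has at least 3 elements. Then φ₂ restricts to a bijective ℤ-linear map from the submodule ℤR⁺ ∩ ker ∂ onto the submodule ker(T₁ − id) ∩ ker(T₂ − id) of ℤR; in particular ℤR⁺ ∩ ker ∂ and ker(T₁ − id) ∩ ker(T₂ − id) are isomorphic as ℤ-modules. (This is the paper's main theorem: for a torsion-free cocompact lattice Γ in Aut(𝒯₁) × Aut(𝒯₂), ℤR⁺ ∩ ker ∂ is the cellular 2-cycle group of the quotient VH-T complex, hence H₂(Γ, ℤ) ≅ ker(T₁ − id) ∩ ker(T₂ − id).) -/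
open Finsupp

set_option linter.unusedSectionVars false
set_option maxHeartbeats 1600000

namespace VHTAux

open Finset

section opeval
variable {R M : Type*} [Fintype R] [DecidableEq R] [AddCommGroup M] [Module ℤ M]

theorem opEval (T : (R →₀ ℤ) →ₗ[ℤ] M) (g : R → M) (hT : ∀ t, T (single t 1) = g t)
    (μ : R →₀ ℤ) : T μ = ∑ t : R, μ t • g t := by
  calc T μ = T (μ.sum fun t c => single t c) := by rw [Finsupp.sum_single]
    _ = μ.sum fun t c => T (single t c) := map_finsuppSum T μ _
    _ = μ.sum fun t c => c • g t := by
        apply Finsupp.sum_congr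
        intro t _
        have h1 : single t (μ t) = μ t • single t (1:ℤ) := by
          rw [Finsupp.smul_single, smul_eq_mul, mul_one]
        rw [h1, T.map_smul, hT t]
        exact Int.cast_smul_eq_zsmul ℤ (μ t) (g t)
    _ = ∑ t : R, μ t • g t := Finsupp.sum_fintype _ _ (fun t => zero_smul _ _)


end opeval

section trans
variable {R B : Type*} [Fintype R] [DecidableEq R] [Fintype B] [DecidableEq B]

-- reindex a univ sum by an involution
theorem sumInvol (h : R → R) (hh : ∀ t, h (h t) = t) (f : R → ℤ) :
    ∑ s : R, f (h s) = ∑ s : R, f s :=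
  Function.Bijective.sum_comp (Function.Involutive.bijective hh) f


theorem filterReindex (g : R → R) (hg : ∀ t, g (g t) = t) (P : R → Prop) [DecidablePred P]
    (f : R → ℤ) :
    ∑ s ∈ Finset.univ.filter (fun s => P s), f (g s) =
      ∑ t ∈ Finset.univ.filter (fun t => P (g t)), f t := by
  rw [Finset.sum_filter, Finset.sum_filter,
    ← sumInvol g hg (fun t => if P (g t) then f t else 0)]
  apply Finset.sum_congr rfl
  intro s _
  rw [hg]


/-- Evaluation formula for a transition operator. -/
theorem evalTrans (b : R → B) (h : R → R) (hh : ∀ t, h (h t) = t)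
    (T : (R →₀ ℤ) →ₗ[ℤ] (R →₀ ℤ))
    (hT : ∀ t : R, T (single t 1) =
      (∑ s ∈ Finset.univ.filter fun s => b s = b (h t), single s (1 : ℤ)) - single (h t) 1)
    (μ : R →₀ ℤ) (s : R) :
    T μ s = (∑ u ∈ Finset.univ.filter fun u => b u = b s, μ (h u)) - μ (h s) := by
  have e1 := opEval T _ hT μ
  have e2 : T μ s = ∑ t : R, μ t * (((∑ u ∈ Finset.univ.filter fun u => b u = b (h t),
      single u (1:ℤ)) : R →₀ ℤ) s - (single (h t) (1:ℤ)) s) := by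
    rw [e1]
    rw [Finsupp.finset_sum_apply]
    apply Finset.sum_congr rfl
    intro t _
    rw [Finsupp.smul_apply, Finsupp.sub_apply, smul_eq_mul]
  rw [e2]
  have e3 : ∀ t : R, ((∑ u ∈ Finset.univ.filter fun u => b u = b (h t),
      single u (1:ℤ)) : R →₀ ℤ) s = if b s = b (h t) then 1 else 0 := by
    intro t
    rw [Finsupp.finset_sum_apply]
    simp [Finsupp.single_apply, Finset.sum_ite_eq]
  have e4 : ∀ t : R, (single (h t) (1:ℤ)) s = if t = h s then 1 else 0 := by
    intro t
    rw [Finsupp.single_apply]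
    congr 1
    apply propext
    constructor
    · intro e; rw [← e, hh]
    · intro e; rw [e, hh]
  calc ∑ t : R, μ t * (((∑ u ∈ Finset.univ.filter fun u => b u = b (h t),
          single u (1:ℤ)) : R →₀ ℤ) s - (single (h t) (1:ℤ)) s)
      = ∑ t : R, ((if b (h t) = b s then μ t else 0) - (if t = h s then μ t else 0)) := by
        apply Finset.sum_congr rfl
        intro t _
        rw [e3, e4]
        rw [mul_sub]
        congr 1
        · rw [mul_ite, mul_one, mul_zero]
          congr 1
          apply propext; exact eq_comm
        · rw [mul_ite, mul_one, mul_zero]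
    _ = (∑ t : R, if b (h t) = b s then μ t else 0) - ∑ t : R, (if t = h s then μ t else 0) :=
        Finset.sum_sub_distrib _ _
    _ = (∑ u ∈ Finset.univ.filter fun u => b u = b s, μ (h u)) - μ (h s) := by
        congr 1
        · rw [Finset.sum_filter]
          rw [← sumInvol h hh (fun u => if b u = b s then μ (h u) else 0)]
          apply Finset.sum_congr rfl
          intro t _
          rw [hh]
        · rw [Finset.sum_ite_eq' Finset.univ (h s) μ]
          simp

theorem kerTrans (b : R → B) (h : R → R) (hh : ∀ t, h (h t) = t)
    (hfib : ∀ β : B, 3 ≤ (Finset.univ.filter fun s => b s = β).card)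
    (lam : R → ℤ)
    (hyp : ∀ s, (∑ u ∈ Finset.univ.filter fun u => b u = b s, lam (h u)) - lam (h s) = lam s) :
    (∀ s, lam (h s) = -lam s) ∧
      (∀ β : B, ∑ u ∈ Finset.univ.filter (fun u => b u = β), lam u = 0) := by
  set C : B → ℤ := fun β => ∑ u ∈ Finset.univ.filter (fun u => b u = β), lam (h u) with hC
  set N : B → ℤ := fun β => ((Finset.univ.filter fun s => b s = β).card : ℤ) with hN
  have e1 : ∀ s, lam s + lam (h s) = C (b s) := by
    intro s; have := hyp s; simp only [hC]; linarith
  have e2 : ∀ s, C (b (h s)) = C (b s) := by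
    intro s
    have a1 := e1 (h s)
    rw [hh] at a1
    have a2 := e1 s
    linarith
  have e3 : ∀ β : B, ∑ u ∈ Finset.univ.filter (fun u => b u = β), lam u = N β * C β - C β := by
    intro β
    have h1 : ∀ u ∈ Finset.univ.filter (fun u => b u = β), lam u = C β - lam (h u) := by
      intro u hu
      have hb := (Finset.mem_filter.mp hu).2
      have := e1 u
      rw [hb] at this
      linarith
    have h2 : ∑ u ∈ Finset.univ.filter (fun u => b u = β), lam (h u) = C β := rfl
    rw [Finset.sum_congr rfl h1, Finset.sum_sub_distrib, h2, Finset.sum_const, nsmul_eq_mul]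
  have S2 : ∑ s : R, C (b s) ^ 2 = ∑ β : B, N β * C β ^ 2 := by
    rw [← Finset.sum_fiberwise Finset.univ b (fun s => C (b s) ^ 2)]
    apply Finset.sum_congr rfl
    intro β _
    have h1 : ∀ u ∈ Finset.univ.filter (fun i => b i = β), C (b u) ^ 2 = C β ^ 2 := by
      intro u hu; rw [(Finset.mem_filter.mp hu).2]
    rw [Finset.sum_congr rfl h1, Finset.sum_const, nsmul_eq_mul]
  have S1 : ∑ s : R, lam s * C (b s) = ∑ β : B, (N β - 1) * C β ^ 2 := by
    rw [← Finset.sum_fiberwise Finset.univ b (fun s => lam s * C (b s))]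
    apply Finset.sum_congr rfl
    intro β _
    have h1 : ∀ u ∈ Finset.univ.filter (fun i => b i = β), lam u * C (b u) = lam u * C β := by
      intro u hu; rw [(Finset.mem_filter.mp hu).2]
    rw [Finset.sum_congr rfl h1, ← Finset.sum_mul, e3 β]
    ring
  have S3 : ∑ s : R, C (b s) ^ 2 = 2 * ∑ s : R, lam s * C (b s) := by
    have r2 : ∑ s : R, lam (h s) * C (b s) = ∑ s : R, lam s * C (b s) := by
      calc ∑ s : R, lam (h s) * C (b s)
          = ∑ s : R, lam (h s) * C (b (h (h s))) := by
            apply Finset.sum_congr rfl; intro s _; rw [hh]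
        _ = ∑ s : R, lam s * C (b (h s)) := sumInvol h hh (fun s => lam s * C (b (h s)))
        _ = ∑ s : R, lam s * C (b s) := by
            apply Finset.sum_congr rfl; intro s _; rw [e2]
    calc ∑ s : R, C (b s) ^ 2
        = ∑ s : R, (lam s * C (b s) + lam (h s) * C (b s)) := by
          apply Finset.sum_congr rfl; intro s _
          rw [← add_mul, e1 s]; ring
      _ = (∑ s : R, lam s * C (b s)) + ∑ s : R, lam (h s) * C (b s) := Finset.sum_add_distrib
      _ = 2 * ∑ s : R, lam s * C (b s) := by rw [r2]; ring
  have e4 : ∑ β : B, (N β - 2) * C β ^ 2 = 0 := by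
    have expand : ∑ β : B, (N β - 2) * C β ^ 2 =
        2 * (∑ β : B, (N β - 1) * C β ^ 2) - ∑ β : B, N β * C β ^ 2 := by
      rw [Finset.mul_sum, ← Finset.sum_sub_distrib]
      apply Finset.sum_congr rfl; intro β _; ring
    rw [expand, ← S2, ← S1, S3]
    ring
  have e5 : ∀ β : B, C β = 0 := by
    intro β
    have nonneg : ∀ γ ∈ Finset.univ, 0 ≤ (N γ - 2) * C γ ^ 2 := by
      intro γ _
      apply mul_nonneg
      · have := hfib γ
        simp only [hN]
        push_cast
        omega
      · positivity
    have each := (Finset.sum_eq_zero_iff_of_nonneg nonneg).mp e4 β (Finset.mem_univ β)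
    have hNβ : 1 ≤ N β - 2 := by
      have := hfib β
      simp only [hN]
      push_cast
      omega
    have : C β ^ 2 = 0 := by
      rcases mul_eq_zero.mp each with h' | h'
      · omega
      · exact h'
    exact (pow_eq_zero_iff two_ne_zero).mp this
  constructor
  · intro s
    have := e1 s
    rw [e5 (b s)] at this
    linarith
  · intro β
    rw [e3 β, e5 β]
    ring

end trans

section phi
variable {R : Type*} [Fintype R] [DecidableEq R]

theorem evalPhi (h v : R → R) (hh : ∀ t, h (h t) = t) (hv : ∀ t, v (v t) = t)
    (hcomm : ∀ t, h (v t) = v (h t))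
    (φ₂ : (R →₀ ℤ) →ₗ[ℤ] (R →₀ ℤ))
    (hφ₂ : ∀ t : R, φ₂ (single t 1) =
      single t 1 - single (v t) 1 - single (h t) 1 + single (h (v t)) 1)
    (μ : R →₀ ℤ) (s : R) :
    φ₂ μ s = μ s - μ (v s) - μ (h s) + μ (h (v s)) := by
  rw [opEval φ₂ _ hφ₂ μ, Finsupp.finset_sum_apply]
  have key : ∀ t : R, ((μ t • (single t 1 - single (v t) 1 - single (h t) 1
      + single (h (v t)) (1:ℤ)) : R →₀ ℤ)) s =
      (if t = s then μ t else 0) - (if t = v s then μ t else 0)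
      - (if t = h s then μ t else 0) + (if t = h (v s) then μ t else 0) := by
    intro t
    rw [Finsupp.smul_apply, Finsupp.add_apply, Finsupp.sub_apply, Finsupp.sub_apply,
      smul_eq_mul, Finsupp.single_apply, Finsupp.single_apply, Finsupp.single_apply,
      Finsupp.single_apply]
    have c1 : (v t = s) = (t = v s) := by
      apply propext; constructor
      · intro e; rw [← e, hv]
      · intro e; rw [e, hv]
    have c2 : (h t = s) = (t = h s) := by
      apply propext; constructor
      · intro e; rw [← e, hh]
      · intro e; rw [e, hh]
    have c3 : (h (v t) = s) = (t = h (v s)) := by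
      apply propext; constructor
      · intro e; rw [← e, ← hcomm (v t), hv, hh]
      · intro e; rw [e, ← hcomm (v s), hv, hh]
    simp only [c1, c2, c3]
    split_ifs <;> ring
  rw [Finset.sum_congr rfl (fun t _ => key t)]
  rw [Finset.sum_add_distrib, Finset.sum_sub_distrib, Finset.sum_sub_distrib]
  simp [Finset.sum_ite_eq']

end phi

/-- exactly one of `α`, `bar α` lies in the orientation -/
theorem exactlyOne {A : Type*} (barA : A → A) (hbarAfix : ∀ x, barA x ≠ x) (Aplus : Set A)
    (hAplus : ∀ x : A, ∃! y, y ∈ Aplus ∧ (y = x ∨ y = barA x)) (α : A) :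
    (α ∈ Aplus ∧ barA α ∉ Aplus) ∨ (α ∉ Aplus ∧ barA α ∈ Aplus) := by
  obtain ⟨y, ⟨hy, hyor⟩, huniq⟩ := hAplus α
  have hne : α ≠ barA α := fun e => hbarAfix α e.symm
  rcases hyor with e | e
  · subst e
    left
    refine ⟨hy, fun hb => ?_⟩
    have := huniq (barA y) ⟨hb, Or.inr rfl⟩
    exact hne this.symm
  · subst e
    right
    refine ⟨fun ha => hne (huniq α ⟨ha, Or.inl rfl⟩), hy⟩

section bd
variable {R A B : Type*} [Fintype R] [DecidableEq R] [Fintype A] [DecidableEq A]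
  [Fintype B] [DecidableEq B]

theorem bdPhi
    (a : R → A) (b : R → B) (h v : R → R)
    (hh : ∀ t, h (h t) = t) (hv : ∀ t, v (v t) = t)
    (hcomm : ∀ t, h (v t) = v (h t))
    (φ₂ : (R →₀ ℤ) →ₗ[ℤ] (R →₀ ℤ))
    (hφ₂ : ∀ t : R, φ₂ (single t 1) =
      single t 1 - single (v t) 1 - single (h t) 1 + single (h (v t)) 1)
    (barA : A → A) (barB : B → B)
    (hbarA : ∀ x, barA (barA x) = x) (hbarB : ∀ x, barB (barB x) = x)
    (hbarAfix : ∀ x, barA x ≠ x) (hbarBfix : ∀ x, barB x ≠ x)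
    (hah : ∀ t, a (h t) = barA (a t)) (hbv : ∀ t, b (v t) = barB (b t))
    (Aplus : Set A) (Bplus : Set B)
    (hAplus : ∀ x : A, ∃! y, y ∈ Aplus ∧ (y = x ∨ y = barA x))
    (hBplus : ∀ x : B, ∃! y, y ∈ Bplus ∧ (y = x ∨ y = barB x))
    (ε : ((A →₀ ℤ) × (B →₀ ℤ)) →ₗ[ℤ] ((A →₀ ℤ) × (B →₀ ℤ)))
    (hεA : ∀ α ∈ Aplus, ε (single α 1, 0) = (single α 1, 0))
    (hεA' : ∀ α ∈ Aplus, ε (single (barA α) 1, 0) = -(single α 1, 0))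
    (hεB : ∀ β ∈ Bplus, ε (0, single β 1) = (0, single β 1))
    (hεB' : ∀ β ∈ Bplus, ε (0, single (barB β) 1) = -(0, single β 1))
    (bd : (R →₀ ℤ) →ₗ[ℤ] ((A →₀ ℤ) × (B →₀ ℤ)))
    (hbd : ∀ t : R, bd (single t 1) =
      ε ((single (a t) 1, 0) + (0, single (b (h t)) 1)
        - (single (a (v t)) 1, 0) - (0, single (b t) 1)))
    (μ : R →₀ ℤ) :
    (∀ γ ∈ Aplus, (bd μ).1 γ =
        ∑ s ∈ Finset.univ.filter (fun s => a s = γ), φ₂ μ s) ∧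
    (∀ γ : A, γ ∉ Aplus → (bd μ).1 γ = 0) ∧
    (∀ γ ∈ Bplus, (bd μ).2 γ =
        -∑ s ∈ Finset.univ.filter (fun s => b s = γ), φ₂ μ s) ∧
    (∀ γ : B, γ ∉ Bplus → (bd μ).2 γ = 0) := by
  classical
  have EOA := exactlyOne barA hbarAfix Aplus hAplus
  have EOB := exactlyOne barB hbarBfix Bplus hBplus
  set fA : A → (A →₀ ℤ) := fun α => (ε (single α 1, 0)).1 with hfA
  set fB : B → (B →₀ ℤ) := fun β => (ε (0, single β 1)).2 with hfB
  have epsAform : ∀ α : A, ε (single α 1, 0) = (fA α, 0) := by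
    intro α
    rcases EOA α with ⟨h1, _⟩ | ⟨_, h2⟩
    · rw [hεA α h1]
      simp only [hfA, hεA α h1]
    · have e := hεA' (barA α) h2
      rw [hbarA α] at e
      rw [e]
      simp only [hfA, e]
      exact Prod.ext rfl (by simp)
  have epsBform : ∀ β : B, ε (0, single β 1) = (0, fB β) := by
    intro β
    rcases EOB β with ⟨h1, _⟩ | ⟨_, h2⟩
    · rw [hεB β h1]
      simp only [hfB, hεB β h1]
    · have e := hεB' (barB β) h2
      rw [hbarB β] at e
      rw [e]
      simp only [hfB, e]
      exact Prod.ext (by simp) rfl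
  have fAval : ∀ α γ : A, fA α γ =
      if γ ∈ Aplus then ((if α = γ then 1 else 0) - (if α = barA γ then (1:ℤ) else 0))
      else 0 := by
    intro α γ
    rcases EOA α with ⟨h1, _⟩ | ⟨h1, h1'⟩
    · have e1 : fA α = single α 1 := by
        simp only [hfA, hεA α h1]
      rw [e1, Finsupp.single_apply]
      by_cases hγ : γ ∈ Aplus
      · rw [if_pos hγ]
        have hne : α ≠ barA γ := by
          intro e
          rcases EOA γ with ⟨_, hg2⟩ | ⟨hg1, _⟩
          · exact hg2 (e ▸ h1)
          · exact hg1 hγ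
        rw [if_neg hne]
        ring
      · rw [if_neg hγ]
        have : α ≠ γ := fun e => hγ (e ▸ h1)
        rw [if_neg this]
    · have e := hεA' (barA α) h1'
      rw [hbarA α] at e
      have e1 : fA α = -single (barA α) 1 := by
        simp only [hfA, e]
        rfl
      rw [e1, Finsupp.neg_apply, Finsupp.single_apply]
      by_cases hγ : γ ∈ Aplus
      · rw [if_pos hγ]
        have h3 : α ≠ γ := fun e2 => h1 (e2 ▸ hγ)
        rw [if_neg h3]
        have h4 : (barA α = γ) = (α = barA γ) := by
          apply propext
          constructor
          · intro e2; rw [← e2, hbarA]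
          · intro e2; rw [e2, hbarA]
        simp only [h4]
        ring
      · rw [if_neg hγ]
        have : barA α ≠ γ := fun e2 => hγ (e2 ▸ h1')
        rw [if_neg this]
        ring
  have fBval : ∀ β γ : B, fB β γ =
      if γ ∈ Bplus then ((if β = γ then 1 else 0) - (if β = barB γ then (1:ℤ) else 0))
      else 0 := by
    intro β γ
    rcases EOB β with ⟨h1, _⟩ | ⟨h1, h1'⟩
    · have e1 : fB β = single β 1 := by
        simp only [hfB, hεB β h1]
      rw [e1, Finsupp.single_apply]
      by_cases hγ : γ ∈ Bplus
      · rw [if_pos hγ]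
        have hne : β ≠ barB γ := by
          intro e
          rcases EOB γ with ⟨_, hg2⟩ | ⟨hg1, _⟩
          · exact hg2 (e ▸ h1)
          · exact hg1 hγ
        rw [if_neg hne]
        ring
      · rw [if_neg hγ]
        have : β ≠ γ := fun e => hγ (e ▸ h1)
        rw [if_neg this]
    · have e := hεB' (barB β) h1'
      rw [hbarB β] at e
      have e1 : fB β = -single (barB β) 1 := by
        simp only [hfB, e]
        rfl
      rw [e1, Finsupp.neg_apply, Finsupp.single_apply]
      by_cases hγ : γ ∈ Bplus
      · rw [if_pos hγ]
        have h3 : β ≠ γ := fun e2 => h1 (e2 ▸ hγ)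
        rw [if_neg h3]
        have h4 : (barB β = γ) = (β = barB γ) := by
          apply propext
          constructor
          · intro e2; rw [← e2, hbarB]
          · intro e2; rw [e2, hbarB]
        simp only [h4]
        ring
      · rw [if_neg hγ]
        have : barB β ≠ γ := fun e2 => hγ (e2 ▸ h1')
        rw [if_neg this]
        ring
  -- components of bd on basis vectors
  have hbd1 : ∀ t : R, (bd (single t (1:ℤ))).1 = fA (a t) - fA (a (v t)) := by
    intro t
    rw [hbd t, map_sub, map_sub, map_add, epsAform, epsAform, epsBform, epsBform]
    simp
  have hbd2 : ∀ t : R, (bd (single t (1:ℤ))).2 = fB (b (h t)) - fB (b t) := by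
    intro t
    rw [hbd t, map_sub, map_sub, map_add, epsAform, epsAform, epsBform, epsBform]
    simp
  -- evaluation of the components of bd μ
  have bdfst : ∀ γ : A, (bd μ).1 γ = ∑ t : R, μ t * (fA (a t) γ - fA (a (v t)) γ) := by
    intro γ
    rw [opEval bd (fun t => bd (single t 1)) (fun t => rfl) μ, Prod.fst_sum,
      Finsupp.finset_sum_apply]
    apply Finset.sum_congr rfl
    intro t _
    have : (μ t • bd (single t (1:ℤ))).1 = μ t • (bd (single t (1:ℤ))).1 := rfl
    rw [this, hbd1 t, Finsupp.smul_apply, Finsupp.sub_apply, smul_eq_mul]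
  have bdsnd : ∀ γ : B, (bd μ).2 γ = ∑ t : R, μ t * (fB (b (h t)) γ - fB (b t) γ) := by
    intro γ
    rw [opEval bd (fun t => bd (single t 1)) (fun t => rfl) μ, Prod.snd_sum,
      Finsupp.finset_sum_apply]
    apply Finset.sum_congr rfl
    intro t _
    have : (μ t • bd (single t (1:ℤ))).2 = μ t • (bd (single t (1:ℤ))).2 := rfl
    rw [this, hbd2 t, Finsupp.smul_apply, Finsupp.sub_apply, smul_eq_mul]
  -- fiber sums of φ₂ μ
  have hhv : ∀ t, h (v (h (v t))) = t := by
    intro t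
    rw [← hcomm (v t), hv, hh]
  have phiFiberA : ∀ γ : A,
      ∑ s ∈ Finset.univ.filter (fun s => a s = γ), φ₂ μ s =
        (∑ t ∈ Finset.univ.filter (fun t => a t = γ), μ t)
        - (∑ t ∈ Finset.univ.filter (fun t => a t = barA γ), μ t)
        - (∑ t ∈ Finset.univ.filter (fun t => a (v t) = γ), μ t)
        + (∑ t ∈ Finset.univ.filter (fun t => a (v t) = barA γ), μ t) := by
    intro γ
    have e0 : ∀ s ∈ Finset.univ.filter (fun s => a s = γ), φ₂ μ s =
        μ s - μ (v s) - μ (h s) + μ (h (v s)) := fun s _ =>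
      evalPhi h v hh hv hcomm φ₂ hφ₂ μ s
    rw [Finset.sum_congr rfl e0, Finset.sum_add_distrib, Finset.sum_sub_distrib,
      Finset.sum_sub_distrib]
    have r2 : ∑ s ∈ Finset.univ.filter (fun s => a s = γ), μ (v s) =
        ∑ t ∈ Finset.univ.filter (fun t => a (v t) = γ), μ t :=
      filterReindex v hv (fun s => a s = γ) μ
    have r3 : ∑ s ∈ Finset.univ.filter (fun s => a s = γ), μ (h s) =
        ∑ t ∈ Finset.univ.filter (fun t => a t = barA γ), μ t := by
      rw [filterReindex h hh (fun s => a s = γ) μ]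
      apply Finset.sum_congr _ (fun x _ => rfl)
      apply Finset.filter_congr
      intro x _
      simp only [hah x]
      constructor
      · intro e; rw [← e, hbarA]
      · intro e; rw [e, hbarA]
    have r4 : ∑ s ∈ Finset.univ.filter (fun s => a s = γ), μ (h (v s)) =
        ∑ t ∈ Finset.univ.filter (fun t => a (v t) = barA γ), μ t := by
      rw [filterReindex (fun s => h (v s)) hhv (fun s => a s = γ) μ]
      apply Finset.sum_congr _ (fun x _ => rfl)
      apply Finset.filter_congr
      intro x _
      simp only [hah (v x)]
      constructor
      · intro e; rw [← e, hbarA]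
      · intro e; rw [e, hbarA]
    rw [r2, r3, r4]
    ring
  have phiFiberB : ∀ γ : B,
      ∑ s ∈ Finset.univ.filter (fun s => b s = γ), φ₂ μ s =
        (∑ t ∈ Finset.univ.filter (fun t => b t = γ), μ t)
        - (∑ t ∈ Finset.univ.filter (fun t => b t = barB γ), μ t)
        - (∑ t ∈ Finset.univ.filter (fun t => b (h t) = γ), μ t)
        + (∑ t ∈ Finset.univ.filter (fun t => b (h t) = barB γ), μ t) := by
    intro γ
    have e0 : ∀ s ∈ Finset.univ.filter (fun s => b s = γ), φ₂ μ s =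
        μ s - μ (v s) - μ (h s) + μ (h (v s)) := fun s _ =>
      evalPhi h v hh hv hcomm φ₂ hφ₂ μ s
    rw [Finset.sum_congr rfl e0, Finset.sum_add_distrib, Finset.sum_sub_distrib,
      Finset.sum_sub_distrib]
    have r2 : ∑ s ∈ Finset.univ.filter (fun s => b s = γ), μ (v s) =
        ∑ t ∈ Finset.univ.filter (fun t => b t = barB γ), μ t := by
      rw [filterReindex v hv (fun s => b s = γ) μ]
      apply Finset.sum_congr _ (fun x _ => rfl)
      apply Finset.filter_congr
      intro x _
      simp only [hbv x]
      constructor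
      · intro e; rw [← e, hbarB]
      · intro e; rw [e, hbarB]
    have r3 : ∑ s ∈ Finset.univ.filter (fun s => b s = γ), μ (h s) =
        ∑ t ∈ Finset.univ.filter (fun t => b (h t) = γ), μ t :=
      filterReindex h hh (fun s => b s = γ) μ
    have r4 : ∑ s ∈ Finset.univ.filter (fun s => b s = γ), μ (h (v s)) =
        ∑ t ∈ Finset.univ.filter (fun t => b (h t) = barB γ), μ t := by
      rw [filterReindex (fun s => h (v s)) hhv (fun s => b s = γ) μ]
      apply Finset.sum_congr _ (fun x _ => rfl)
      apply Finset.filter_congr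
      intro x _
      have e1 : b (h (v x)) = barB (b (h x)) := by
        rw [hcomm x, hbv (h x)]
      simp only [e1]
      constructor
      · intro e; rw [← e, hbarB]
      · intro e; rw [e, hbarB]
    rw [r2, r3, r4]
  -- split the evaluation sums into filtered sums
  have splitA : ∀ γ : A, γ ∈ Aplus →
      ∑ t : R, μ t * (fA (a t) γ - fA (a (v t)) γ) =
        (∑ t ∈ Finset.univ.filter (fun t => a t = γ), μ t)
        - (∑ t ∈ Finset.univ.filter (fun t => a t = barA γ), μ t)
        - (∑ t ∈ Finset.univ.filter (fun t => a (v t) = γ), μ t)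
        + (∑ t ∈ Finset.univ.filter (fun t => a (v t) = barA γ), μ t) := by
    intro γ hγ
    have e0 : ∀ t : R, μ t * (fA (a t) γ - fA (a (v t)) γ) =
        (if a t = γ then μ t else 0) - (if a t = barA γ then μ t else 0)
        - (if a (v t) = γ then μ t else 0) + (if a (v t) = barA γ then μ t else 0) := by
      intro t
      rw [fAval, fAval, if_pos hγ, if_pos hγ]
      split_ifs <;> ring
    rw [Finset.sum_congr rfl (fun t _ => e0 t), Finset.sum_add_distrib,
      Finset.sum_sub_distrib, Finset.sum_sub_distrib,
      Finset.sum_filter, Finset.sum_filter, Finset.sum_filter, Finset.sum_filter]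
  have splitB : ∀ γ : B, γ ∈ Bplus →
      ∑ t : R, μ t * (fB (b (h t)) γ - fB (b t) γ) =
        (∑ t ∈ Finset.univ.filter (fun t => b (h t) = γ), μ t)
        - (∑ t ∈ Finset.univ.filter (fun t => b (h t) = barB γ), μ t)
        - (∑ t ∈ Finset.univ.filter (fun t => b t = γ), μ t)
        + (∑ t ∈ Finset.univ.filter (fun t => b t = barB γ), μ t) := by
    intro γ hγ
    have e0 : ∀ t : R, μ t * (fB (b (h t)) γ - fB (b t) γ) =
        (if b (h t) = γ then μ t else 0) - (if b (h t) = barB γ then μ t else 0)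
        - (if b t = γ then μ t else 0) + (if b t = barB γ then μ t else 0) := by
      intro t
      rw [fBval, fBval, if_pos hγ, if_pos hγ]
      split_ifs <;> ring
    rw [Finset.sum_congr rfl (fun t _ => e0 t), Finset.sum_add_distrib,
      Finset.sum_sub_distrib, Finset.sum_sub_distrib,
      Finset.sum_filter, Finset.sum_filter, Finset.sum_filter, Finset.sum_filter]
  refine ⟨?_, ?_, ?_, ?_⟩
  · intro γ hγ
    rw [bdfst γ, splitA γ hγ, phiFiberA γ]
  · intro γ hγ
    rw [bdfst γ]
    apply Finset.sum_eq_zero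
    intro t _
    rw [fAval, fAval, if_neg hγ, if_neg hγ]
    ring
  · intro γ hγ
    rw [bdsnd γ, splitB γ hγ, phiFiberB γ]
    ring
  · intro γ hγ
    rw [bdsnd γ]
    apply Finset.sum_eq_zero
    intro t _
    rw [fBval, fBval, if_neg hγ, if_neg hγ]
    ring
end bd

section rev
variable {R B : Type*} [Fintype R] [DecidableEq R] [Fintype B] [DecidableEq B]

theorem kerTransRev (b : R → B) (h : R → R) (hh : ∀ t, h (h t) = t)
    (lam : R → ℤ)
    (anti : ∀ s, lam (h s) = -lam s)
    (fib0 : ∀ β : B, ∑ u ∈ Finset.univ.filter (fun u => b u = β), lam u = 0) (s : R) :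
    (∑ u ∈ Finset.univ.filter fun u => b u = b s, lam (h u)) - lam (h s) = lam s := by
  have e1 : ∑ u ∈ Finset.univ.filter (fun u => b u = b s), lam (h u) =
      ∑ u ∈ Finset.univ.filter (fun u => b u = b s), -lam u :=
    Finset.sum_congr rfl (fun u _ => anti u)
  rw [e1, Finset.sum_neg_distrib, fib0 (b s), anti s]
  ring
end rev

end VHTAux

open VHTAux

/-- **Main theorem (Theorem 4.2 / Theorem 1.1):** `φ₂` restricts to a
bijective `ℤ`-linear map from `ℤR⁺ ∩ ker ∂` (the cellular 2-cycle group of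
the quotient VH-T complex, i.e. `H₂(Γ, ℤ)`) onto
`ker(T₁ − id) ∩ ker(T₂ − id)`; in particular these two `ℤ`-modules are
isomorphic. -/
theorem stmt_0
    {R A B : Type*} [Fintype R] [Fintype A] [Fintype B]
    [DecidableEq R] [DecidableEq A] [DecidableEq B]
    (a : R → A) (b : R → B) (h v : R → R)
    (hh : ∀ t, h (h t) = t) (hv : ∀ t, v (v t) = t)
    (hcomm : ∀ t, h (v t) = v (h t))
    (hfix : ∀ t, h t ≠ t) (vfix : ∀ t, v t ≠ t) (hvfix : ∀ t, h (v t) ≠ t)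
    -- the transition operators T₁, T₂
    (T₁ T₂ : (R →₀ ℤ) →ₗ[ℤ] (R →₀ ℤ))
    (hT₁ : ∀ t : R, T₁ (single t 1) =
      (∑ s ∈ Finset.univ.filter fun s => b s = b (h t), single s (1 : ℤ)) - single (h t) 1)
    (hT₂ : ∀ t : R, T₂ (single t 1) =
      (∑ s ∈ Finset.univ.filter fun s => a s = a (v t), single s (1 : ℤ)) - single (v t) 1)
    -- the map φ₂ and the orientation R⁺
    (φ₂ : (R →₀ ℤ) →ₗ[ℤ] (R →₀ ℤ))
    (hφ₂ : ∀ t : R, φ₂ (single t 1) =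
      single t 1 - single (v t) 1 - single (h t) 1 + single (h (v t)) 1)
    (Rplus : Set R)
    (hRplus : ∀ t : R, ∃! s, s ∈ Rplus ∧ (s = t ∨ s = h t ∨ s = v t ∨ s = h (v t)))
    -- involutions without fixed points on A and B, compatible with a, b, h, v
    (barA : A → A) (barB : B → B)
    (hbarA : ∀ x, barA (barA x) = x) (hbarB : ∀ x, barB (barB x) = x)
    (hbarAfix : ∀ x, barA x ≠ x) (hbarBfix : ∀ x, barB x ≠ x)
    (hah : ∀ t, a (h t) = barA (a t)) (hbv : ∀ t, b (v t) = barB (b t))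
    -- orientations A⁺, B⁺ and the map ε
    (Aplus : Set A) (Bplus : Set B)
    (hAplus : ∀ x : A, ∃! y, y ∈ Aplus ∧ (y = x ∨ y = barA x))
    (hBplus : ∀ x : B, ∃! y, y ∈ Bplus ∧ (y = x ∨ y = barB x))
    (ε : ((A →₀ ℤ) × (B →₀ ℤ)) →ₗ[ℤ] ((A →₀ ℤ) × (B →₀ ℤ)))
    (hεA : ∀ α ∈ Aplus, ε (single α 1, 0) = (single α 1, 0))
    (hεA' : ∀ α ∈ Aplus, ε (single (barA α) 1, 0) = -(single α 1, 0))
    (hεB : ∀ β ∈ Bplus, ε (0, single β 1) = (0, single β 1))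
    (hεB' : ∀ β ∈ Bplus, ε (0, single (barB β) 1) = -(0, single β 1))
    -- the boundary map ∂
    (bd : (R →₀ ℤ) →ₗ[ℤ] ((A →₀ ℤ) × (B →₀ ℤ)))
    (hbd : ∀ t : R, bd (single t 1) =
      ε ((single (a t) 1, 0) + (0, single (b (h t)) 1)
        - (single (a (v t)) 1, 0) - (0, single (b t) 1)))
    -- every fiber of a and of b has at least three elements
    (hafib : ∀ α : A, 3 ≤ (Finset.univ.filter fun s => a s = α).card)
    (hbfib : ∀ β : B, 3 ≤ (Finset.univ.filter fun s => b s = β).card) :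
    Submodule.map φ₂ (Finsupp.supported ℤ ℤ Rplus ⊓ LinearMap.ker bd) =
      LinearMap.ker (T₁ - LinearMap.id) ⊓ LinearMap.ker (T₂ - LinearMap.id) ∧
    Set.InjOn φ₂
      ((Finsupp.supported ℤ ℤ Rplus ⊓ LinearMap.ker bd : Submodule ℤ (R →₀ ℤ)) :
        Set (R →₀ ℤ)) ∧
    Nonempty
      ((Finsupp.supported ℤ ℤ Rplus ⊓ LinearMap.ker bd : Submodule ℤ (R →₀ ℤ)) ≃ₗ[ℤ]
        (LinearMap.ker (T₁ - LinearMap.id) ⊓ LinearMap.ker (T₂ - LinearMap.id) :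
          Submodule ℤ (R →₀ ℤ))) := by
  classical
  have hhv : ∀ t, h (v (h (v t))) = t := by
    intro t
    rw [← hcomm (v t), hv, hh]
  -- antisymmetry of images of φ₂
  have phiAntiH : ∀ (μ : R →₀ ℤ) (s : R), φ₂ μ (h s) = -φ₂ μ s := by
    intro μ s
    rw [evalPhi h v hh hv hcomm φ₂ hφ₂ μ (h s), evalPhi h v hh hv hcomm φ₂ hφ₂ μ s,
      hh, hcomm (h s), hh, ← hcomm s]
    ring
  have phiAntiV : ∀ (μ : R →₀ ℤ) (s : R), φ₂ μ (v s) = -φ₂ μ s := by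
    intro μ s
    rw [evalPhi h v hh hv hcomm φ₂ hφ₂ μ (v s), evalPhi h v hh hv hcomm φ₂ hφ₂ μ s,
      hv s]
    ring
  -- characterisation of the right-hand submodule
  have memK : ∀ lam : R →₀ ℤ,
      lam ∈ LinearMap.ker (T₁ - LinearMap.id) ⊓ LinearMap.ker (T₂ - LinearMap.id) ↔
      ((∀ s, lam (h s) = -lam s) ∧
        (∀ β : B, ∑ u ∈ Finset.univ.filter (fun u => b u = β), lam u = 0) ∧
        (∀ s, lam (v s) = -lam s) ∧
        (∀ α : A, ∑ u ∈ Finset.univ.filter (fun u => a u = α), lam u = 0)) := by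
    intro lam
    have eq1 : ∀ s : R, ((T₁ - LinearMap.id : (R →₀ ℤ) →ₗ[ℤ] (R →₀ ℤ)) lam) s = 0 ↔
        ((∑ u ∈ Finset.univ.filter fun u => b u = b s, lam (h u)) - lam (h s)) - lam s = 0 := by
      intro s
      rw [LinearMap.sub_apply, LinearMap.id_apply, Finsupp.sub_apply,
        evalTrans b h hh T₁ hT₁ lam s]
    have eq2 : ∀ s : R, ((T₂ - LinearMap.id : (R →₀ ℤ) →ₗ[ℤ] (R →₀ ℤ)) lam) s = 0 ↔
        ((∑ u ∈ Finset.univ.filter fun u => a u = a s, lam (v u)) - lam (v s)) - lam s = 0 := by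
      intro s
      rw [LinearMap.sub_apply, LinearMap.id_apply, Finsupp.sub_apply,
        evalTrans a v hv T₂ hT₂ lam s]
    constructor
    · intro hm
      obtain ⟨h1, h2⟩ := Submodule.mem_inf.mp hm
      have k1 : ∀ s, (∑ u ∈ Finset.univ.filter fun u => b u = b s, lam (h u)) - lam (h s)
          = lam s := by
        intro s
        have e0 : ((T₁ - LinearMap.id : (R →₀ ℤ) →ₗ[ℤ] (R →₀ ℤ)) lam) s = 0 := by
          rw [LinearMap.mem_ker.mp h1]; rfl
        have := (eq1 s).mp e0
        linarith
      have k2 : ∀ s, (∑ u ∈ Finset.univ.filter fun u => a u = a s, lam (v u)) - lam (v s)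
          = lam s := by
        intro s
        have e0 : ((T₂ - LinearMap.id : (R →₀ ℤ) →ₗ[ℤ] (R →₀ ℤ)) lam) s = 0 := by
          rw [LinearMap.mem_ker.mp h2]; rfl
        have := (eq2 s).mp e0
        linarith
      obtain ⟨A1, A2⟩ := kerTrans b h hh hbfib (⇑lam) k1
      obtain ⟨B1, B2⟩ := kerTrans a v hv hafib (⇑lam) k2
      exact ⟨A1, A2, B1, B2⟩
    · rintro ⟨A1, A2, B1, B2⟩
      apply Submodule.mem_inf.mpr
      constructor
      · apply LinearMap.mem_ker.mpr
        ext s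
        rw [Finsupp.zero_apply]
        apply (eq1 s).mpr
        have := kerTransRev b h hh (⇑lam) A1 A2 s
        linarith
      · apply LinearMap.mem_ker.mpr
        ext s
        rw [Finsupp.zero_apply]
        apply (eq2 s).mpr
        have := kerTransRev a v hv (⇑lam) B1 B2 s
        linarith
  -- orbit representatives
  have exclP : ∀ s, s ∈ Rplus → h s ∉ Rplus ∧ v s ∉ Rplus ∧ h (v s) ∉ Rplus := by
    intro s hs
    obtain ⟨y, _, huniq⟩ := hRplus s
    have hsy : s = y := huniq s ⟨hs, Or.inl rfl⟩
    refine ⟨fun hc => ?_, fun hc => ?_, fun hc => ?_⟩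
    · exact hfix s ((huniq (h s) ⟨hc, Or.inr (Or.inl rfl)⟩).trans hsy.symm)
    · exact vfix s ((huniq (v s) ⟨hc, Or.inr (Or.inr (Or.inl rfl))⟩).trans hsy.symm)
    · exact hvfix s ((huniq (h (v s)) ⟨hc, Or.inr (Or.inr (Or.inr rfl))⟩).trans hsy.symm)
  have mem4 : ∀ s, s ∈ Rplus ∨ h s ∈ Rplus ∨ v s ∈ Rplus ∨ h (v s) ∈ Rplus := by
    intro s
    obtain ⟨y, ⟨hy, hor⟩, _⟩ := hRplus s
    rcases hor with e | e | e | e <;> rw [e] at hy <;> tauto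
  have suppZero : ∀ μ : R →₀ ℤ, μ ∈ Finsupp.supported ℤ ℤ Rplus →
      ∀ s, s ∉ Rplus → μ s = 0 := by
    intro μ hμ s hs
    by_contra hne
    exact hs (hμ (Finsupp.mem_support_iff.mpr hne))
  have suppVal : ∀ μ : R →₀ ℤ, μ ∈ Finsupp.supported ℤ ℤ Rplus →
      ∀ t ∈ Rplus, φ₂ μ t = μ t := by
    intro μ hμ t ht
    obtain ⟨e1, e2, e3⟩ := exclP t ht
    rw [evalPhi h v hh hv hcomm φ₂ hφ₂ μ t, suppZero μ hμ _ e2, suppZero μ hμ _ e1,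
      suppZero μ hμ _ e3]
    ring
  -- flip of fiber sums under antisymmetry
  have flipA : ∀ lam : R →₀ ℤ, (∀ s, lam (h s) = -lam s) → ∀ α : A,
      ∑ u ∈ Finset.univ.filter (fun u => a u = α), lam u =
        -∑ u ∈ Finset.univ.filter (fun u => a u = barA α), lam u := by
    intro lam anti α
    have r1 : ∑ s ∈ Finset.univ.filter (fun s => a s = α), lam (h s) =
        ∑ t ∈ Finset.univ.filter (fun t => a t = barA α), lam t := by
      rw [filterReindex h hh (fun s => a s = α) lam]
      apply Finset.sum_congr _ (fun x _ => rfl)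
      apply Finset.filter_congr
      intro x _
      simp only [hah x]
      constructor
      · intro e; rw [← e, hbarA]
      · intro e; rw [e, hbarA]
    have r2 : ∑ s ∈ Finset.univ.filter (fun s => a s = α), lam (h s) =
        -∑ s ∈ Finset.univ.filter (fun s => a s = α), lam s := by
      rw [← Finset.sum_neg_distrib]
      exact Finset.sum_congr rfl (fun u _ => anti u)
    rw [← r1, r2]
    ring
  have flipB : ∀ lam : R →₀ ℤ, (∀ s, lam (v s) = -lam s) → ∀ β : B,
      ∑ u ∈ Finset.univ.filter (fun u => b u = β), lam u =
        -∑ u ∈ Finset.univ.filter (fun u => b u = barB β), lam u := by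
    intro lam anti β
    have r1 : ∑ s ∈ Finset.univ.filter (fun s => b s = β), lam (v s) =
        ∑ t ∈ Finset.univ.filter (fun t => b t = barB β), lam t := by
      rw [filterReindex v hv (fun s => b s = β) lam]
      apply Finset.sum_congr _ (fun x _ => rfl)
      apply Finset.filter_congr
      intro x _
      simp only [hbv x]
      constructor
      · intro e; rw [← e, hbarB]
      · intro e; rw [e, hbarB]
    have r2 : ∑ s ∈ Finset.univ.filter (fun s => b s = β), lam (v s) =
        -∑ s ∈ Finset.univ.filter (fun s => b s = β), lam s := by
      rw [← Finset.sum_neg_distrib]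
      exact Finset.sum_congr rfl (fun u _ => anti u)
    rw [← r1, r2]
    ring
  -- the submodule equality
  have hmap : Submodule.map φ₂ (Finsupp.supported ℤ ℤ Rplus ⊓ LinearMap.ker bd) =
      LinearMap.ker (T₁ - LinearMap.id) ⊓ LinearMap.ker (T₂ - LinearMap.id) := by
    apply le_antisymm
    · rintro x hx
      obtain ⟨μ, hμD, rfl⟩ := hx
      obtain ⟨hsupp, hker⟩ := Submodule.mem_inf.mp hμD
      have hbd0 : bd μ = 0 := LinearMap.mem_ker.mp hker
      obtain ⟨P1, P2, P3, P4⟩ := bdPhi a b h v hh hv hcomm φ₂ hφ₂ barA barB hbarA hbarB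
        hbarAfix hbarBfix hah hbv Aplus Bplus hAplus hBplus ε hεA hεA' hεB hεB' bd hbd μ
      have fibA : ∀ α : A, ∑ u ∈ Finset.univ.filter (fun u => a u = α), φ₂ μ u = 0 := by
        intro α
        rcases exactlyOne barA hbarAfix Aplus hAplus α with ⟨h1, _⟩ | ⟨_, h2⟩
        · rw [← P1 α h1, hbd0]
          rfl
        · rw [flipA (φ₂ μ) (phiAntiH μ) α, ← P1 (barA α) h2, hbd0]
          rfl
      have fibB : ∀ β : B, ∑ u ∈ Finset.univ.filter (fun u => b u = β), φ₂ μ u = 0 := by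
        intro β
        rcases exactlyOne barB hbarBfix Bplus hBplus β with ⟨h1, _⟩ | ⟨_, h2⟩
        · have := P3 β h1
          rw [hbd0] at this
          have : -∑ u ∈ Finset.univ.filter (fun u => b u = β), φ₂ μ u = 0 := by
            rw [← this]; rfl
          linarith
        · have e1 := flipB (φ₂ μ) (phiAntiV μ) β
          have := P3 (barB β) h2
          rw [hbd0] at this
          have e2 : -∑ u ∈ Finset.univ.filter (fun u => b u = barB β), φ₂ μ u = 0 := by
            rw [← this]; rfl
          rw [e1]
          linarith
      exact (memK (φ₂ μ)).mpr ⟨phiAntiH μ, fibB, phiAntiV μ, fibA⟩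
    · intro lam hlam
      obtain ⟨antiH, fibB, antiV, fibA⟩ := (memK lam).mp hlam
      set μ : R →₀ ℤ := lam.filter (· ∈ Rplus) with hμdef
      have hval : ∀ s, μ s = if s ∈ Rplus then lam s else 0 := by
        intro s
        rw [hμdef, Finsupp.filter_apply]
      have hμsupp : μ ∈ Finsupp.supported ℤ ℤ Rplus := by
        rw [Finsupp.mem_supported]
        intro s hs
        have hs' : μ s ≠ 0 := Finsupp.mem_support_iff.mp (Finset.mem_coe.mp hs)
        rw [hval s] at hs'
        by_contra hc
        rw [if_neg hc] at hs'
        exact hs' rfl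
      have hphi : φ₂ μ = lam := by
        ext s
        rw [evalPhi h v hh hv hcomm φ₂ hφ₂ μ s]
        rcases mem4 s with hc | hc | hc | hc
        · obtain ⟨e1, e2, e3⟩ := exclP s hc
          rw [hval s, hval (v s), hval (h s), hval (h (v s)), if_pos hc, if_neg e2,
            if_neg e1, if_neg e3]
          ring
        · obtain ⟨e1, e2, e3⟩ := exclP (h s) hc
          rw [hh] at e1
          rw [← hcomm s] at e2
          have e3' : v s ∉ Rplus := by
            rw [hcomm (h s), hh] at e3
            exact e3
          rw [hval s, hval (v s), hval (h s), hval (h (v s)), if_pos hc, if_neg e1,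
            if_neg e3', if_neg e2]
          have := antiH s
          linarith
        · obtain ⟨e1, e2, e3⟩ := exclP (v s) hc
          rw [hv] at e2
          rw [hv] at e3
          rw [hval s, hval (v s), hval (h s), hval (h (v s)), if_pos hc, if_neg e2,
            if_neg e3, if_neg e1]
          have := antiV s
          linarith
        · obtain ⟨e1, e2, e3⟩ := exclP (h (v s)) hc
          rw [hh] at e1
          rw [hhv] at e3
          have e2' : h s ∉ Rplus := by
            rw [← hcomm (v s), hv] at e2
            exact e2
          rw [hval s, hval (v s), hval (h s), hval (h (v s)), if_pos hc, if_neg e3,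
            if_neg e1, if_neg e2']
          have a1 := antiH (v s)
          have a2 := antiV s
          rw [hcomm s] at *
          linarith
      have hbd0 : bd μ = 0 := by
        obtain ⟨P1, P2, P3, P4⟩ := bdPhi a b h v hh hv hcomm φ₂ hφ₂ barA barB hbarA hbarB
          hbarAfix hbarBfix hah hbv Aplus Bplus hAplus hBplus ε hεA hεA' hεB hεB' bd hbd μ
        apply Prod.ext
        · ext γ
          simp only [Prod.fst_zero, Finsupp.coe_zero, Pi.zero_apply]
          by_cases hγ : γ ∈ Aplus
          · rw [P1 γ hγ]
            have e0 : ∀ s ∈ Finset.univ.filter (fun s => a s = γ), φ₂ μ s = lam s := by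
              intro s _
              rw [hphi]
            rw [Finset.sum_congr rfl e0]
            exact fibA γ
          · exact P2 γ hγ
        · ext γ
          simp only [Prod.snd_zero, Finsupp.coe_zero, Pi.zero_apply]
          by_cases hγ : γ ∈ Bplus
          · rw [P3 γ hγ]
            have e0 : ∀ s ∈ Finset.univ.filter (fun s => b s = γ), φ₂ μ s = lam s := by
              intro s _
              rw [hphi]
            rw [Finset.sum_congr rfl e0, fibB γ]
            ring
          · exact P4 γ hγ
      exact ⟨μ, Submodule.mem_inf.mpr ⟨hμsupp, LinearMap.mem_ker.mpr hbd0⟩, hphi⟩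
  -- injectivity on the left-hand submodule
  have hinj : Set.InjOn φ₂
      ((Finsupp.supported ℤ ℤ Rplus ⊓ LinearMap.ker bd : Submodule ℤ (R →₀ ℤ)) :
        Set (R →₀ ℤ)) := by
    intro x hx y hy e
    have hxs := (Submodule.mem_inf.mp hx).1
    have hys := (Submodule.mem_inf.mp hy).1
    ext s
    by_cases hs : s ∈ Rplus
    · rw [← suppVal x hxs s hs, ← suppVal y hys s hs, e]
    · rw [suppZero x hxs s hs, suppZero y hys s hs]
  refine ⟨hmap, hinj, ?_⟩
  have hrestrict : ∀ x ∈ (Finsupp.supported ℤ ℤ Rplus ⊓ LinearMap.ker bd :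
      Submodule ℤ (R →₀ ℤ)), φ₂ x ∈
      (LinearMap.ker (T₁ - LinearMap.id) ⊓ LinearMap.ker (T₂ - LinearMap.id) :
        Submodule ℤ (R →₀ ℤ)) := by
    intro x hx
    rw [← hmap]
    exact Submodule.mem_map_of_mem hx
  set f := φ₂.restrict hrestrict with hf
  have hfinj : Function.Injective f := by
    intro x y e
    apply Subtype.ext
    apply hinj x.2 y.2
    have := congrArg Subtype.val e
    simpa [hf, LinearMap.restrict_apply] using this
  have hfsurj : Function.Surjective f := by
    intro y
    have hy : (y : R →₀ ℤ) ∈ Submodule.map φ₂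
        (Finsupp.supported ℤ ℤ Rplus ⊓ LinearMap.ker bd) := by
      rw [hmap]
      exact y.2
    obtain ⟨x, hxD, hx⟩ := hy
    refine ⟨⟨x, hxD⟩, ?_⟩
    apply Subtype.ext
    simpa [hf, LinearMap.restrict_apply] using hx
  exact ⟨LinearEquiv.ofBijective f ⟨hfinj, hfsurj⟩⟩
end

section
/- Let R, A, B, a, b, h, v, T₁, T₂, φ₂, R⁺, ℤR⁺, φ₁, ε and ∂ be as in the context, with h, v and h∘v having no fixed points, and assume that a and b are surjective. Then φ₂(ℤR⁺ ∩ ker ∂) = φ₂(ℤR⁺) ∩ ker(T₁ − id) ∩ ker(T₂ − id); consequently φ₂ restricts to a ℤ-module isomorphism from ℤR⁺ ∩ ker ∂ onto φ₂(ℤR⁺) ∩ ker(T₁ − id) ∩ ker(T₂ − id). -/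
open Finsupp

/-- **Lemma (part):** `φ₂` maps `ℤR⁺ ∩ ker ∂` exactly onto
`φ₂(ℤR⁺) ∩ ker(T₁ − id) ∩ ker(T₂ − id)`, and is injective there;
hence it restricts to an isomorphism between these two `ℤ`-modules. -/
theorem stmt_1
    {R A B : Type*} [Fintype R] [Fintype A] [Fintype B]
    [DecidableEq R] [DecidableEq A] [DecidableEq B]
    (a : R → A) (b : R → B) (h v : R → R)
    (hh : ∀ t, h (h t) = t) (hv : ∀ t, v (v t) = t)
    (hcomm : ∀ t, h (v t) = v (h t))
    (hfix : ∀ t, h t ≠ t) (vfix : ∀ t, v t ≠ t) (hvfix : ∀ t, h (v t) ≠ t)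
    -- the transition operators T₁, T₂
    (T₁ T₂ : (R →₀ ℤ) →ₗ[ℤ] (R →₀ ℤ))
    (hT₁ : ∀ t : R, T₁ (single t 1) =
      (∑ s ∈ Finset.univ.filter fun s => b s = b (h t), single s (1 : ℤ)) - single (h t) 1)
    (hT₂ : ∀ t : R, T₂ (single t 1) =
      (∑ s ∈ Finset.univ.filter fun s => a s = a (v t), single s (1 : ℤ)) - single (v t) 1)
    -- the map φ₂ and the orientation R⁺
    (φ₂ : (R →₀ ℤ) →ₗ[ℤ] (R →₀ ℤ))
    (hφ₂ : ∀ t : R, φ₂ (single t 1) =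
      single t 1 - single (v t) 1 - single (h t) 1 + single (h (v t)) 1)
    (Rplus : Set R)
    (hRplus : ∀ t : R, ∃! s, s ∈ Rplus ∧ (s = t ∨ s = h t ∨ s = v t ∨ s = h (v t)))
    -- involutions without fixed points on A and B, compatible with a, b, h, v
    (barA : A → A) (barB : B → B)
    (hbarA : ∀ x, barA (barA x) = x) (hbarB : ∀ x, barB (barB x) = x)
    (hbarAfix : ∀ x, barA x ≠ x) (hbarBfix : ∀ x, barB x ≠ x)
    (hah : ∀ t, a (h t) = barA (a t)) (hbv : ∀ t, b (v t) = barB (b t))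
    -- the map φ₁
    (φ₁ : ((A →₀ ℤ) × (B →₀ ℤ)) →ₗ[ℤ] ((R →₀ ℤ) × (R →₀ ℤ)))
    (hφ₁A : ∀ α : A, φ₁ (single α 1, 0) =
      (0, (∑ s ∈ Finset.univ.filter fun s => a s = barA α, single s (1 : ℤ)) -
        ∑ s ∈ Finset.univ.filter fun s => a s = α, single s (1 : ℤ)))
    (hφ₁B : ∀ β : B, φ₁ (0, single β 1) =
      ((∑ s ∈ Finset.univ.filter fun s => b s = β, single s (1 : ℤ)) -
        ∑ s ∈ Finset.univ.filter fun s => b s = barB β, single s (1 : ℤ), 0))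
    -- orientations A⁺, B⁺ and the map ε
    (Aplus : Set A) (Bplus : Set B)
    (hAplus : ∀ x : A, ∃! y, y ∈ Aplus ∧ (y = x ∨ y = barA x))
    (hBplus : ∀ x : B, ∃! y, y ∈ Bplus ∧ (y = x ∨ y = barB x))
    (ε : ((A →₀ ℤ) × (B →₀ ℤ)) →ₗ[ℤ] ((A →₀ ℤ) × (B →₀ ℤ)))
    (hεA : ∀ α ∈ Aplus, ε (single α 1, 0) = (single α 1, 0))
    (hεA' : ∀ α ∈ Aplus, ε (single (barA α) 1, 0) = -(single α 1, 0))
    (hεB : ∀ β ∈ Bplus, ε (0, single β 1) = (0, single β 1))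
    (hεB' : ∀ β ∈ Bplus, ε (0, single (barB β) 1) = -(0, single β 1))
    -- the boundary map ∂
    (bd : (R →₀ ℤ) →ₗ[ℤ] ((A →₀ ℤ) × (B →₀ ℤ)))
    (hbd : ∀ t : R, bd (single t 1) =
      ε ((single (a t) 1, 0) + (0, single (b (h t)) 1)
        - (single (a (v t)) 1, 0) - (0, single (b t) 1)))
    -- a and b are surjective
    (ha : Function.Surjective a) (hb : Function.Surjective b) :
    Submodule.map φ₂ (Finsupp.supported ℤ ℤ Rplus ⊓ LinearMap.ker bd) =
      Submodule.map φ₂ (Finsupp.supported ℤ ℤ Rplus) ⊓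
        LinearMap.ker (T₁ - LinearMap.id) ⊓ LinearMap.ker (T₂ - LinearMap.id) ∧
    Set.InjOn φ₂
      ((Finsupp.supported ℤ ℤ Rplus ⊓ LinearMap.ker bd : Submodule ℤ (R →₀ ℤ)) :
        Set (R →₀ ℤ)) := by
  classical
  -- evaluation of fiber sums
  have hSa : ∀ (γ : A) (s : R),
      (∑ s' ∈ Finset.univ.filter fun s' => a s' = γ, single s' (1:ℤ)) s
        = if a s = γ then 1 else 0 := by
    intro γ s
    rw [Finsupp.finset_sum_apply]
    simp [Finsupp.single_apply, Finset.sum_ite_eq']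
  have hSb : ∀ (γ : B) (s : R),
      (∑ s' ∈ Finset.univ.filter fun s' => b s' = γ, single s' (1:ℤ)) s
        = if b s = γ then 1 else 0 := by
    intro γ s
    rw [Finsupp.finset_sum_apply]
    simp [Finsupp.single_apply, Finset.sum_ite_eq']
  -- classification of elements of A and B
  have hAcls : ∀ α : A, α ∈ Aplus ∨ ∃ α' ∈ Aplus, α = barA α' := by
    intro α
    obtain ⟨y, ⟨hy, hy2⟩, -⟩ := hAplus α
    rcases hy2 with rfl | h
    · exact Or.inl hy
    · exact Or.inr ⟨y, hy, by rw [h, hbarA]⟩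
  have hBcls : ∀ β : B, β ∈ Bplus ∨ ∃ β' ∈ Bplus, β = barB β' := by
    intro β
    obtain ⟨y, ⟨hy, hy2⟩, -⟩ := hBplus β
    rcases hy2 with rfl | h
    · exact Or.inl hy
    · exact Or.inr ⟨y, hy, by rw [h, hbarB]⟩
  have hAnot : ∀ α ∈ Aplus, barA α ∉ Aplus := by
    intro α hα hcon
    obtain ⟨y, -, huniq⟩ := hAplus α
    have h1 : α = y := huniq α ⟨hα, Or.inl rfl⟩
    have h2 : barA α = y := huniq (barA α) ⟨hcon, Or.inr rfl⟩
    exact hbarAfix α (h2.trans h1.symm)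
  have hBnot : ∀ β ∈ Bplus, barB β ∉ Bplus := by
    intro β hβ hcon
    obtain ⟨y, -, huniq⟩ := hBplus β
    have h1 : β = y := huniq β ⟨hβ, Or.inl rfl⟩
    have h2 : barB β = y := huniq (barB β) ⟨hcon, Or.inr rfl⟩
    exact hbarBfix β (h2.trans h1.symm)
  -- Rplus facts
  have hRnot : ∀ t ∈ Rplus, h t ∉ Rplus ∧ v t ∉ Rplus ∧ h (v t) ∉ Rplus := by
    intro t ht
    obtain ⟨y, -, huniq⟩ := hRplus t
    have h1 : t = y := huniq t ⟨ht, Or.inl rfl⟩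
    refine ⟨fun hc => ?_, fun hc => ?_, fun hc => ?_⟩
    · exact hfix t (((huniq (h t) ⟨hc, Or.inr (Or.inl rfl)⟩).trans h1.symm))
    · exact vfix t (((huniq (v t) ⟨hc, Or.inr (Or.inr (Or.inl rfl))⟩).trans h1.symm))
    · exact hvfix t (((huniq (h (v t)) ⟨hc, Or.inr (Or.inr (Or.inr rfl))⟩).trans h1.symm))
  -- pointwise formula for φ₂
  have hφ₂apply : ∀ (x : R →₀ ℤ) (t : R),
      φ₂ x t = x t - x (v t) - x (h t) + x (h (v t)) := by
    intro x t
    induction x using Finsupp.induction_linear with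
    | zero => simp
    | add f g hf hg =>
        simp only [map_add, Finsupp.add_apply, hf, hg]; ring
    | single s n =>
        have hn : (single s n : R →₀ ℤ) = n • single s 1 := by simp
        have c1 : (v s = t) ↔ (s = v t) := ⟨fun q => by rw [← q, hv], fun q => by rw [q, hv]⟩
        have c2 : (h s = t) ↔ (s = h t) := ⟨fun q => by rw [← q, hh], fun q => by rw [q, hh]⟩
        have c3 : (h (v s) = t) ↔ (s = h (v t)) :=
          ⟨fun q => by rw [← q, hcomm (h (v s)), hh, hv],
           fun q => by rw [q, hcomm (h (v t)), hh, hv]⟩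
        rw [hn, map_smul, hφ₂]
        simp only [Finsupp.smul_apply, Finsupp.add_apply, Finsupp.sub_apply,
          Finsupp.single_apply, smul_eq_mul, c1, c2, c3]
        split_ifs <;> ring
  -- injectivity of φ₂ on ℤR⁺
  have hinj : Set.InjOn φ₂ (Finsupp.supported ℤ ℤ Rplus : Submodule ℤ (R →₀ ℤ)) := by
    intro x hx y hy hxy
    have hx' := Finsupp.mem_supported ℤ x |>.mp hx
    have hy' := Finsupp.mem_supported ℤ y |>.mp hy
    have hz : ∀ (z : R →₀ ℤ), ↑z.support ⊆ Rplus → ∀ s ∉ Rplus, z s = 0 := by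
      intro z hzs s hs
      by_contra hne
      exact hs (hzs (Finsupp.mem_support_iff.mpr hne))
    ext t
    by_cases ht : t ∈ Rplus
    · obtain ⟨hH, hV, hHV⟩ := hRnot t ht
      have e1 := hφ₂apply x t
      have e2 := hφ₂apply y t
      rw [hz x hx' _ hV, hz x hx' _ hH, hz x hx' _ hHV] at e1
      rw [hz y hy' _ hV, hz y hy' _ hH, hz y hy' _ hHV] at e2
      have e3 : x t - 0 - 0 + 0 = y t - 0 - 0 + 0 := by
        rw [← e1, ← e2, hxy]
      simpa using e3
    · rw [hz x hx' t ht, hz y hy' t ht]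
  -- φ₁ ∘ ε = φ₁
  have hφ₁ε : ∀ z, φ₁ (ε z) = φ₁ z := by
    have hA : ∀ u : A →₀ ℤ, φ₁ (ε (u, 0)) = φ₁ (u, 0) := by
      intro u
      induction u using Finsupp.induction_linear with
      | zero => simp [Prod.mk_zero_zero]
      | add f g hf hg =>
          have e : ((f + g : A →₀ ℤ), (0 : B →₀ ℤ)) = (f, 0) + (g, 0) := by simp
          rw [e, map_add, map_add, hf, hg, map_add]
      | single α n =>
          have hn : ((single α n : A →₀ ℤ), (0 : B →₀ ℤ)) = n • ((single α 1 : A →₀ ℤ), (0 : B →₀ ℤ)) := by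
            simp [Prod.smul_mk]
          rw [hn, map_smul, map_smul, map_smul]
          congr 1
          rcases hAcls α with hα | ⟨α', hα', rfl⟩
          · rw [hεA α hα]
          · rw [hεA' α' hα', map_neg, hφ₁A, hφ₁A, hbarA]
            simp [Prod.ext_iff, neg_sub]
    have hB : ∀ w : B →₀ ℤ, φ₁ (ε (0, w)) = φ₁ (0, w) := by
      intro w
      induction w using Finsupp.induction_linear with
      | zero => simp [Prod.mk_zero_zero]
      | add f g hf hg =>
          have e : ((0 : A →₀ ℤ), (f + g : B →₀ ℤ)) = (0, f) + (0, g) := by simp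
          rw [e, map_add, map_add, hf, hg, map_add]
      | single β n =>
          have hn : ((0 : A →₀ ℤ), (single β n : B →₀ ℤ)) = n • ((0 : A →₀ ℤ), (single β 1 : B →₀ ℤ)) := by
            simp [Prod.smul_mk]
          rw [hn, map_smul, map_smul, map_smul]
          congr 1
          rcases hBcls β with hβ | ⟨β', hβ', rfl⟩
          · rw [hεB β hβ]
          · rw [hεB' β' hβ', map_neg, hφ₁B, hφ₁B, hbarB]
            simp [Prod.ext_iff, neg_sub]
    intro z
    have hz : z = (z.1, 0) + (0, z.2) := by simp
    rw [hz, map_add, map_add, hA, hB, map_add]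
  -- the main computation on basis vectors
  have hstep : ∀ t : R, φ₁ (bd (single t 1)) =
      ((T₁ - LinearMap.id : (R →₀ ℤ) →ₗ[ℤ] R →₀ ℤ) (φ₂ (single t 1)), (T₂ - LinearMap.id : (R →₀ ℤ) →ₗ[ℤ] R →₀ ℤ) (φ₂ (single t 1))) := by
    intro t
    have eavh : a (v (h t)) = barA (a (v t)) := by rw [← hcomm, hah]
    rw [hbd t, hφ₁ε]
    rw [map_sub, map_sub, map_add, hφ₁A, hφ₁B, hφ₁A, hφ₁B]
    simp only [hφ₂, map_add, map_sub, LinearMap.sub_apply, LinearMap.id_apply,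
      hT₁, hT₂, hcomm, hbv, hah, hh, hv, hbarA, hbarB, eavh,
      Prod.mk_add_mk, Prod.mk_sub_mk, Prod.mk.injEq]
    constructor <;> abel
  -- key identity
  have key : ∀ x : R →₀ ℤ, φ₁ (bd x) =
      ((T₁ - LinearMap.id : (R →₀ ℤ) →ₗ[ℤ] R →₀ ℤ) (φ₂ x), (T₂ - LinearMap.id : (R →₀ ℤ) →ₗ[ℤ] R →₀ ℤ) (φ₂ x)) := by
    intro x
    induction x using Finsupp.induction_linear with
    | zero => simp [Prod.mk_zero_zero]
    | add f g hf hg =>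
        simp only [map_add, hf, hg, Prod.mk_add_mk]
    | single t n =>
        have hn : (single t n : R →₀ ℤ) = n • single t 1 := by simp
        rw [hn, map_smul, map_smul, map_smul, map_smul, map_smul, hstep t, Prod.smul_mk]
  -- pointwise evaluation of φ₁
  have hφ₁eval2 : ∀ (w : (A →₀ ℤ) × (B →₀ ℤ)) (s : R),
      (φ₁ w).2 s = w.1 (barA (a s)) - w.1 (a s) := by
    have hAside : ∀ (u : A →₀ ℤ) (s : R),
        (φ₁ (u, 0)).2 s = u (barA (a s)) - u (a s) := by
      intro u s
      induction u using Finsupp.induction_linear with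
      | zero => simp [Prod.mk_zero_zero]
      | add f g hf hg =>
          have e : ((f + g : A →₀ ℤ), (0 : B →₀ ℤ)) = (f, 0) + (g, 0) := by simp
          rw [e, map_add]
          simp only [Prod.snd_add, Finsupp.add_apply, hf, hg]
          ring
      | single α n =>
          have hn : ((single α n : A →₀ ℤ), (0 : B →₀ ℤ)) = n • ((single α 1 : A →₀ ℤ), (0 : B →₀ ℤ)) := by
            simp [Prod.smul_mk]
          rw [hn, map_smul]
          have d1 : (α = a s) = (a s = α) := propext ⟨Eq.symm, Eq.symm⟩
          have d2 : (α = barA (a s)) = (a s = barA α) :=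
            propext ⟨fun q => by rw [q, hbarA], fun q => by rw [q, hbarA]⟩
          simp only [Prod.smul_snd, Finsupp.smul_apply, hφ₁A, Finsupp.sub_apply, hSa,
            Finsupp.single_apply, smul_eq_mul, d1, d2]
          split_ifs <;> ring
    have hBside : ∀ (w : B →₀ ℤ) (s : R), (φ₁ (0, w)).2 s = 0 := by
      intro w s
      induction w using Finsupp.induction_linear with
      | zero => simp [Prod.mk_zero_zero]
      | add f g hf hg =>
          have e : ((0 : A →₀ ℤ), (f + g : B →₀ ℤ)) = (0, f) + (0, g) := by simp
          rw [e, map_add]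
          simp only [Prod.snd_add, Finsupp.add_apply, hf, hg, add_zero]
      | single β n =>
          have hn : ((0 : A →₀ ℤ), (single β n : B →₀ ℤ)) = n • ((0 : A →₀ ℤ), (single β 1 : B →₀ ℤ)) := by
            simp [Prod.smul_mk]
          rw [hn, map_smul]
          simp [hφ₁B]
    intro w s
    have hz : w = (w.1, 0) + (0, w.2) := by simp
    conv_lhs => rw [hz, map_add]
    simp only [Prod.snd_add, Finsupp.add_apply, hAside, hBside]
    ring
  have hφ₁eval1 : ∀ (w : (A →₀ ℤ) × (B →₀ ℤ)) (s : R),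
      (φ₁ w).1 s = w.2 (b s) - w.2 (barB (b s)) := by
    have hBside : ∀ (u : B →₀ ℤ) (s : R),
        (φ₁ (0, u)).1 s = u (b s) - u (barB (b s)) := by
      intro u s
      induction u using Finsupp.induction_linear with
      | zero => simp [Prod.mk_zero_zero]
      | add f g hf hg =>
          have e : ((0 : A →₀ ℤ), (f + g : B →₀ ℤ)) = (0, f) + (0, g) := by simp
          rw [e, map_add]
          simp only [Prod.fst_add, Finsupp.add_apply, hf, hg]
          ring
      | single β n =>
          have hn : ((0 : A →₀ ℤ), (single β n : B →₀ ℤ)) = n • ((0 : A →₀ ℤ), (single β 1 : B →₀ ℤ)) := by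
            simp [Prod.smul_mk]
          rw [hn, map_smul]
          have d1 : (β = b s) = (b s = β) := propext ⟨Eq.symm, Eq.symm⟩
          have d2 : (β = barB (b s)) = (b s = barB β) :=
            propext ⟨fun q => by rw [q, hbarB], fun q => by rw [q, hbarB]⟩
          simp only [Prod.smul_fst, Finsupp.smul_apply, hφ₁B, Finsupp.sub_apply, hSb,
            Finsupp.single_apply, smul_eq_mul, d1, d2]
          split_ifs <;> ring
    have hAside : ∀ (w : A →₀ ℤ) (s : R), (φ₁ (w, 0)).1 s = 0 := by
      intro w s
      induction w using Finsupp.induction_linear with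
      | zero => simp [Prod.mk_zero_zero]
      | add f g hf hg =>
          have e : ((f + g : A →₀ ℤ), (0 : B →₀ ℤ)) = (f, 0) + (g, 0) := by simp
          rw [e, map_add]
          simp only [Prod.fst_add, Finsupp.add_apply, hf, hg, add_zero]
      | single α n =>
          have hn : ((single α n : A →₀ ℤ), (0 : B →₀ ℤ)) = n • ((single α 1 : A →₀ ℤ), (0 : B →₀ ℤ)) := by
            simp [Prod.smul_mk]
          rw [hn, map_smul]
          simp [hφ₁A]
    intro w s
    have hz : w = (w.1, 0) + (0, w.2) := by simp
    conv_lhs => rw [hz, map_add]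
    simp only [Prod.fst_add, Finsupp.add_apply, hAside, hBside]
    ring
  -- support of ε z
  have hεsuppA : ∀ z, ∀ α ∉ Aplus, (ε z).1 α = 0 := by
    have hA : ∀ u : A →₀ ℤ, ∀ α ∉ Aplus, (ε (u, 0)).1 α = 0 := by
      intro u
      induction u using Finsupp.induction_linear with
      | zero => simp [Prod.mk_zero_zero]
      | add f g hf hg =>
          intro α hα
          have e : ((f + g : A →₀ ℤ), (0 : B →₀ ℤ)) = (f, 0) + (g, 0) := by simp
          rw [e, map_add]
          simp [hf α hα, hg α hα]
      | single α' n =>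
          intro α hα
          have hn : ((single α' n : A →₀ ℤ), (0 : B →₀ ℤ)) = n • ((single α' 1 : A →₀ ℤ), (0 : B →₀ ℤ)) := by
            simp [Prod.smul_mk]
          rw [hn, map_smul]
          rcases hAcls α' with hα' | ⟨α'', hα'', rfl⟩
          · rw [hεA α' hα']
            simp only [Prod.smul_fst, Finsupp.smul_apply, Finsupp.single_apply]
            rw [if_neg (fun hq : α' = α => hα (hq ▸ hα'))]
            simp
          · rw [hεA' α'' hα'']
            simp only [Prod.smul_fst, Prod.fst_neg, Finsupp.smul_apply, Finsupp.coe_neg,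
              Pi.neg_apply, Finsupp.single_apply]
            rw [if_neg (fun hq : α'' = α => hα (hq ▸ hα''))]
            simp
    have hB : ∀ w : B →₀ ℤ, ∀ α, (ε (0, w)).1 α = 0 := by
      intro w
      induction w using Finsupp.induction_linear with
      | zero => simp [Prod.mk_zero_zero]
      | add f g hf hg =>
          intro α
          have e : ((0 : A →₀ ℤ), (f + g : B →₀ ℤ)) = (0, f) + (0, g) := by simp
          rw [e, map_add]
          simp [hf α, hg α]
      | single β n =>
          intro α
          have hn : ((0 : A →₀ ℤ), (single β n : B →₀ ℤ)) = n • ((0 : A →₀ ℤ), (single β 1 : B →₀ ℤ)) := by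
            simp [Prod.smul_mk]
          rw [hn, map_smul]
          rcases hBcls β with hβ | ⟨β', hβ', rfl⟩
          · rw [hεB β hβ]; simp
          · rw [hεB' β' hβ']; simp
    intro z α hα
    have hz : z = (z.1, 0) + (0, z.2) := by simp
    rw [hz, map_add]
    simp [hA z.1 α hα, hB z.2 α]
  have hεsuppB : ∀ z, ∀ β ∉ Bplus, (ε z).2 β = 0 := by
    have hB : ∀ w : B →₀ ℤ, ∀ β ∉ Bplus, (ε (0, w)).2 β = 0 := by
      intro w
      induction w using Finsupp.induction_linear with
      | zero => simp [Prod.mk_zero_zero]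
      | add f g hf hg =>
          intro β hβ
          have e : ((0 : A →₀ ℤ), (f + g : B →₀ ℤ)) = (0, f) + (0, g) := by simp
          rw [e, map_add]
          simp [hf β hβ, hg β hβ]
      | single β' n =>
          intro β hβ
          have hn : ((0 : A →₀ ℤ), (single β' n : B →₀ ℤ)) = n • ((0 : A →₀ ℤ), (single β' 1 : B →₀ ℤ)) := by
            simp [Prod.smul_mk]
          rw [hn, map_smul]
          rcases hBcls β' with hβ' | ⟨β'', hβ'', rfl⟩
          · rw [hεB β' hβ']
            simp only [Prod.smul_snd, Finsupp.smul_apply, Finsupp.single_apply]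
            rw [if_neg (fun hq : β' = β => hβ (hq ▸ hβ'))]
            simp
          · rw [hεB' β'' hβ'']
            simp only [Prod.smul_snd, Prod.snd_neg, Finsupp.smul_apply, Finsupp.coe_neg,
              Pi.neg_apply, Finsupp.single_apply]
            rw [if_neg (fun hq : β'' = β => hβ (hq ▸ hβ''))]
            simp
    have hA : ∀ u : A →₀ ℤ, ∀ β, (ε (u, 0)).2 β = 0 := by
      intro u
      induction u using Finsupp.induction_linear with
      | zero => simp [Prod.mk_zero_zero]
      | add f g hf hg =>
          intro β
          have e : ((f + g : A →₀ ℤ), (0 : B →₀ ℤ)) = (f, 0) + (g, 0) := by simp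
          rw [e, map_add]
          simp [hf β, hg β]
      | single α n =>
          intro β
          have hn : ((single α n : A →₀ ℤ), (0 : B →₀ ℤ)) = n • ((single α 1 : A →₀ ℤ), (0 : B →₀ ℤ)) := by
            simp [Prod.smul_mk]
          rw [hn, map_smul]
          rcases hAcls α with hα | ⟨α', hα', rfl⟩
          · rw [hεA α hα]; simp
          · rw [hεA' α' hα']; simp
    intro z β hβ
    have hz : z = (z.1, 0) + (0, z.2) := by simp
    rw [hz, map_add]
    simp [hA z.1 β, hB z.2 β hβ]
  -- φ₁ is injective on the image of ε
  have hker : ∀ z, φ₁ (ε z) = 0 → ε z = 0 := by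
    intro z h0
    have hA : (ε z).1 = 0 := by
      ext α
      by_cases hα : α ∈ Aplus
      · obtain ⟨s, hs⟩ := ha α
        have h2 := hφ₁eval2 (ε z) s
        rw [h0] at h2
        simp only [Prod.snd_zero, Finsupp.coe_zero, Pi.zero_apply] at h2
        rw [hs, hεsuppA z _ (hAnot α hα)] at h2
        simp only [Finsupp.coe_zero, Pi.zero_apply]
        omega
      · rw [hεsuppA z α hα]; simp
    have hB : (ε z).2 = 0 := by
      ext β
      by_cases hβ : β ∈ Bplus
      · obtain ⟨s, hs⟩ := hb β
        have h2 := hφ₁eval1 (ε z) s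
        rw [h0] at h2
        simp only [Prod.fst_zero, Finsupp.coe_zero, Pi.zero_apply] at h2
        rw [hs, hεsuppB z _ (hBnot β hβ)] at h2
        simp only [Finsupp.coe_zero, Pi.zero_apply]
        omega
      · rw [hεsuppB z β hβ]; simp
    exact Prod.ext hA hB
  -- bd x lies in the range of ε
  have hbdrange : ∀ x : R →₀ ℤ, ∃ z, bd x = ε z := by
    intro x
    induction x using Finsupp.induction_linear with
    | zero => exact ⟨0, by simp⟩
    | add f g hf hg =>
        obtain ⟨z1, hz1⟩ := hf
        obtain ⟨z2, hz2⟩ := hg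
        exact ⟨z1 + z2, by rw [map_add, hz1, hz2, map_add]⟩
    | single t n =>
        refine ⟨n • ((single (a t) 1, 0) + (0, single (b (h t)) 1)
          - (single (a (v t)) 1, 0) - (0, single (b t) 1)), ?_⟩
        have hn : (single t n : R →₀ ℤ) = n • single t 1 := by simp
        rw [hn, map_smul, hbd t, map_smul]
  -- the two directions for bd x = 0
  have hequiv : ∀ x : R →₀ ℤ, bd x = 0 ↔
      ((T₁ - LinearMap.id : (R →₀ ℤ) →ₗ[ℤ] R →₀ ℤ) (φ₂ x) = 0 ∧ (T₂ - LinearMap.id : (R →₀ ℤ) →ₗ[ℤ] R →₀ ℤ) (φ₂ x) = 0) := by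
    intro x
    constructor
    · intro h0
      have hk := key x
      rw [h0, map_zero] at hk
      refine ⟨?_, ?_⟩
      · have h1 := congrArg Prod.fst hk
        simpa using h1.symm
      · have h1 := congrArg Prod.snd hk
        simpa using h1.symm
    · rintro ⟨h1, h2⟩
      obtain ⟨z, hz⟩ := hbdrange x
      have hk := key x
      rw [h1, h2, hz] at hk
      rw [hz]
      exact hker z hk
  constructor
  · apply le_antisymm
    · rintro y ⟨x, ⟨hxsupp, hxker⟩, rfl⟩
      have hx0 : bd x = 0 := hxker
      obtain ⟨h1, h2⟩ := (hequiv x).mp hx0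
      exact ⟨⟨⟨x, hxsupp, rfl⟩, h1⟩, h2⟩
    · rintro y ⟨⟨⟨x, hxsupp, rfl⟩, hy1⟩, hy2⟩
      have hx0 : bd x = 0 := (hequiv x).mpr ⟨hy1, hy2⟩
      exact ⟨x, ⟨hxsupp, hx0⟩, rfl⟩
  · exact hinj.mono (fun x hx => hx.1)
end

section
/- Let R, A, B, a, b, h, v, T₁, T₂, φ₂, R⁺ and ℤR⁺ be as in the context, with h, v and h∘v having no fixed points. Assume that for every α ∈ A the fiber {s ∈ R : a(s) = α} has at least 3 elements and for every β ∈ B the fiber {s ∈ R : b(s) = β} has at least 3 elements. Then ker(T₁ − id) ∩ ker(T₂ − id) ⊆ φ₂(ℤR⁺), i.e., every element of ℤR killed by both T₁ − id and T₂ − id is the image under φ₂ of an element supported in R⁺. -/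
/-!
A common fixed point `λ` of `T₁` and `T₂` is anti-invariant under `h` and `v`. For `T₁`, the
fixed-point equation reads `λ t + λ (h t) = S (b t)`, where `S β` sums `λ ∘ h` over the fiber of
`b` at `β`. Then `S ∘ b` is `h`-invariant, so `∑ₜ S (b t) λ t = ∑ₜ S (b t) λ (h t)`; summing
fiberwise turns this into `∑_β (#b⁻¹(β) - 2) S β ^ 2 = 0`, which forces `S = 0` when every fiber
has at least three elements. An anti-invariant `λ` is `φ₂` of its restriction to `R⁺`, because
`R⁺` meets each (free) orbit exactly once.
-/

open Finsupp

section

open Finset Function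

variable {R B : Type*}

theorem Finsupp.linearMap_apply_eq_sum [Fintype R] (T : (R →₀ ℤ) →ₗ[ℤ] (R →₀ ℤ)) (l : R →₀ ℤ)
    (x : R) : T l x = ∑ t, l t * T (single t 1) x := by
  conv_lhs => rw [← univ_sum_single l]
  simp only [map_sum, finsetSum_apply]
  refine Finset.sum_congr rfl fun t _ => ?_
  rw [← smul_single_one, map_smul, smul_apply, smul_eq_mul]

def IsTransitionOperator [Fintype R] [DecidableEq B] (b : R → B) (h : R → R)
    (T : (R →₀ ℤ) →ₗ[ℤ] (R →₀ ℤ)) : Prop :=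
  ∀ t : R, T (single t 1) =
    (∑ s ∈ Finset.univ.filter fun s => b s = b (h t), single s (1 : ℤ)) - single (h t) 1

theorem IsTransitionOperator.apply [Fintype R] [DecidableEq R] [DecidableEq B] {b : R → B}
    {h : R → R} {T : (R →₀ ℤ) →ₗ[ℤ] (R →₀ ℤ)} (hT : IsTransitionOperator b h T) (hh : Involutive h)
    (l : R →₀ ℤ) (x : R) :
    T l x = ∑ s ∈ univ.filter (b · = b x), l (h s) - l (h x) := by
  rw [IsTransitionOperator] at hT
  rw [linearMap_apply_eq_sum, ← hh.bijective.sum_comp]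
  simp only [hT, hh _, Finsupp.sub_apply, finsetSum_apply, single_apply, Finset.sum_ite_eq',
    mem_filter, mem_univ, true_and, mul_sub, mul_ite, mul_one, mul_zero, sum_sub_distrib, if_true]
  simp_rw [sum_filter, eq_comm]

theorem sum_comp_mul_eq_sum_mul_sum_fiber {M : Type*} [NonUnitalNonAssocSemiring M] [Fintype R]
    [Fintype B] [DecidableEq B] (b : R → B) (f : B → M) (g : R → M) :
    ∑ t, f (b t) * g t = ∑ β, f β * ∑ t ∈ univ.filter (b · = β), g t := by
  rw [← sum_fiberwise univ b]
  refine Finset.sum_congr rfl fun β _ => ?_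
  rw [Finset.mul_sum]
  exact Finset.sum_congr rfl fun t ht => by rw [(mem_filter.1 ht).2]

theorem apply_eq_neg_of_add_apply_eq_sum_fiber [Fintype R] [Fintype B] [DecidableEq B]
    (b : R → B) {h : R → R} (hh : Involutive h)
    (hbfib : ∀ β : B, 3 ≤ (univ.filter fun s => b s = β).card)
    {l : R → ℤ} (hl : ∀ x, l x + l (h x) = ∑ s ∈ univ.filter (b · = b x), l (h s)) (x : R) :
    l (h x) = -l x := by
  set S : B → ℤ := fun β => ∑ s ∈ univ.filter (b · = β), l (h s)
  set n : B → ℤ := fun β => ((univ.filter fun s => b s = β).card : ℤ)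
  have S_comp_h : ∀ y, S (b (h y)) = S (b y) := fun y => by
    simp only [S, ← hl, hh y, add_comm]
  have sum_fiber : ∀ β, ∑ t ∈ univ.filter (b · = β), l t = (n β - 1) * S β := by
    intro β
    have : ∑ t ∈ univ.filter (b · = β), (l t + l (h t)) = n β * S β := by
      rw [Finset.sum_congr rfl fun t ht => by rw [hl, (mem_filter.1 ht).2], sum_const,
        nsmul_eq_mul]
    rw [sum_add_distrib] at this
    linarith
  have swap : ∑ t, S (b t) * l t = ∑ t, S (b t) * l (h t) := by
    rw [← hh.bijective.sum_comp]
    simp only [S_comp_h]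
  have key : ∑ β, (n β - 2) * S β ^ 2 = 0 := by
    rw [← sub_eq_zero.2 swap, sum_comp_mul_eq_sum_mul_sum_fiber b S,
      sum_comp_mul_eq_sum_mul_sum_fiber b S, ← sum_sub_distrib]
    refine Finset.sum_congr rfl fun β _ => ?_
    rw [sum_fiber]
    ring
  have S_eq_zero : ∀ β, S β = 0 := by
    have n_sub_two : ∀ β, 1 ≤ n β - 2 := fun β => by
      have := hbfib β
      simp only [n]
      omega
    intro β
    have := (sum_eq_zero_iff_of_nonneg fun γ _ =>
      mul_nonneg (by linarith [n_sub_two γ]) (sq_nonneg (S γ))).1 key β (mem_univ β)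
    nlinarith [n_sub_two β, sq_nonneg (S β)]
  linarith [hl x, S_eq_zero (b x)]

theorem IsTransitionOperator.apply_eq_neg_of_apply_eq_self [Fintype R] [DecidableEq R] [Fintype B]
    [DecidableEq B] {b : R → B} {h : R → R} {T : (R →₀ ℤ) →ₗ[ℤ] (R →₀ ℤ)}
    (hT : IsTransitionOperator b h T) (hh : Involutive h)
    (hbfib : ∀ β : B, 3 ≤ (univ.filter fun s => b s = β).card) {l : R →₀ ℤ} (hTl : T l = l)
    (x : R) : l (h x) = -l x :=
  apply_eq_neg_of_add_apply_eq_sum_fiber b hh hbfib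
    (fun y => by linarith [hT.apply hh l y, congrArg (· y) hTl]) x

theorem apply_eq_alternating_sum [Fintype R] [DecidableEq R] {h v : R → R} (hh : Involutive h)
    (hv : Involutive v) (hcomm : ∀ t, h (v t) = v (h t)) (φ : (R →₀ ℤ) →ₗ[ℤ] (R →₀ ℤ))
    (hφ : ∀ t : R,
      φ (single t 1) = single t 1 - single (v t) 1 - single (h t) 1 + single (h (v t)) 1)
    (m : R →₀ ℤ) (x : R) :
    φ m x = m x - m (v x) - m (h x) + m (h (v x)) := by
  rw [linearMap_apply_eq_sum]
  simp only [hφ, Finsupp.add_apply, Finsupp.sub_apply, single_apply, hh.eq_iff, hv.eq_iff, mul_add,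
    mul_sub, mul_ite, mul_one, mul_zero, sum_add_distrib, sum_sub_distrib, Finset.sum_ite_eq',
    mem_univ, if_true, hcomm]

theorem ite_mem_orbit_sum_eq_self {M : Type*} [AddCommMonoid M] {h v : R → R}
    (hh : Involutive h) (hfix : ∀ t, h t ≠ t) (vfix : ∀ t, v t ≠ t) (hvfix : ∀ t, h (v t) ≠ t)
    {P : Set R} [DecidablePred (· ∈ P)]
    (hP : ∀ t, ∃! s, s ∈ P ∧ (s = t ∨ s = h t ∨ s = v t ∨ s = h (v t))) (x : R) (c : M) :
    ((if x ∈ P then c else 0) + (if v x ∈ P then c else 0) + (if h x ∈ P then c else 0) +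
      if h (v x) ∈ P then c else 0) = c := by
  classical
  obtain ⟨s, ⟨hsP, hs⟩, huniq⟩ := hP x
  have mem_iff : ∀ y, (y = x ∨ y = h x ∨ y = v x ∨ y = h (v x)) → (y ∈ P ↔ y = s) :=
    fun y hy => ⟨fun hyP => huniq y ⟨hyP, hy⟩, fun e => e ▸ hsP⟩
  have hx_ne_vx : h x ≠ v x := fun e => hvfix x (by rw [← e, hh])
  have hx_ne_hvx : h x ≠ h (v x) := hh.injective.ne (vfix x).symm
  simp (disch := simp) only [mem_iff]
  rcases hs with hs | hs | hs | hs <;> subst s <;>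
    simp [hfix, vfix, hvfix, hx_ne_vx, hx_ne_hvx, hx_ne_vx.symm, hx_ne_hvx.symm, (hfix x).symm,
      (vfix x).symm, (hvfix x).symm, (hfix (v x)).symm]

end

/-- **Lemma (connected, final step of the proof of the main theorem):**
`ker(T₁ − id) ∩ ker(T₂ − id) ⊆ φ₂(ℤR⁺)`, i.e. every element of `ℤR`
killed by both `T₁ − id` and `T₂ − id` is the image under `φ₂` of an
element supported in `R⁺`. -/
theorem stmt_2
    {R A B : Type*} [Fintype R] [Fintype A] [Fintype B]
    [DecidableEq R] [DecidableEq A] [DecidableEq B]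
    (a : R → A) (b : R → B) (h v : R → R)
    (hh : ∀ t, h (h t) = t) (hv : ∀ t, v (v t) = t)
    (hcomm : ∀ t, h (v t) = v (h t))
    (hfix : ∀ t, h t ≠ t) (vfix : ∀ t, v t ≠ t) (hvfix : ∀ t, h (v t) ≠ t)
    (T₁ T₂ : (R →₀ ℤ) →ₗ[ℤ] (R →₀ ℤ))
    (hT₁ : ∀ t : R, T₁ (single t 1) =
      (∑ s ∈ Finset.univ.filter fun s => b s = b (h t), single s (1 : ℤ)) - single (h t) 1)
    (hT₂ : ∀ t : R, T₂ (single t 1) =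
      (∑ s ∈ Finset.univ.filter fun s => a s = a (v t), single s (1 : ℤ)) - single (v t) 1)
    (φ₂ : (R →₀ ℤ) →ₗ[ℤ] (R →₀ ℤ))
    (hφ₂ : ∀ t : R, φ₂ (single t 1) =
      single t 1 - single (v t) 1 - single (h t) 1 + single (h (v t)) 1)
    (Rplus : Set R)
    (hRplus : ∀ t : R, ∃! s, s ∈ Rplus ∧ (s = t ∨ s = h t ∨ s = v t ∨ s = h (v t)))
    (hafib : ∀ α : A, 3 ≤ (Finset.univ.filter fun s => a s = α).card)
    (hbfib : ∀ β : B, 3 ≤ (Finset.univ.filter fun s => b s = β).card) :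
    LinearMap.ker (T₁ - LinearMap.id) ⊓ LinearMap.ker (T₂ - LinearMap.id) ≤
      Submodule.map φ₂ (Finsupp.supported ℤ ℤ Rplus) := by
  classical
  intro l hl
  obtain ⟨hT₁l, hT₂l⟩ : T₁ l = l ∧ T₂ l = l := by
    simpa [sub_eq_zero] using hl
  have lh := IsTransitionOperator.apply_eq_neg_of_apply_eq_self (T := T₁) hT₁ hh hbfib hT₁l
  have lv := IsTransitionOperator.apply_eq_neg_of_apply_eq_self (T := T₂) hT₂ hv hafib hT₂l
  refine ⟨l.filter (· ∈ Rplus), (restrictDom ℤ ℤ Rplus l).2, ?_⟩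
  ext x
  rw [apply_eq_alternating_sum hh hv hcomm φ₂ hφ₂,
    ← ite_mem_orbit_sum_eq_self hh hfix vfix hvfix hRplus x (l x)]
  simp only [filter_apply, lh, lv, neg_neg]
  split_ifs <;> ring
end

section
/- Let R, A, B, a, b, h, v, T₁, T₂, φ₂, φ₁, ε and ∂ be as in the context. Then the diagram commutes: for every t ∈ R, φ₁(∂ δ_t) = ((T₁ − id)(φ₂ δ_t), (T₂ − id)(φ₂ δ_t)); equivalently, φ₁ ∘ ∂ = ((T₁ − id) ∘ φ₂, (T₂ − id) ∘ φ₂) as ℤ-linear maps from ℤR to ℤR × ℤR. -/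
/-!
Since `ε` at most flips the sign of a basis vector `δ_ᾱ`, and `φ₁ δ_ᾱ = -φ₁ δ_α`, the map `φ₁`
does not see `ε`. On the other side, `φ₂ δ_t` is a difference of two vectors of the form
`δ_u - δ_{h u}`, on which `T₁ - id` kills the `-δ_{h u}` correction terms of `T₁`; what is left are
fibre sums of `b`, which match `φ₁ ∂ δ_t` because `b ∘ v = bar ∘ b` and `h ∘ v = v ∘ h`.
Symmetrically for `T₂`, with the roles of `h` and `v` exchanged.
-/

open Finsupp

theorem eq_of_eqOn_orientation {A M : Type*} [AddCommGroup M] {bar : A → A}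
    (hbar : Function.Involutive bar) {P : Set A} (hP : ∀ x, ∃ y, y ∈ P ∧ (y = x ∨ y = bar x))
    {f g : A → M} (hg : ∀ x, g (bar x) = -g x)
    (hf : ∀ y ∈ P, f y = g y) (hf' : ∀ y ∈ P, f (bar y) = -g y) (x : A) : f x = g x := by
  obtain ⟨y, hy, rfl | hyx⟩ := hP x
  · exact hf y hy
  · rw [← hbar x, ← hyx, hf' y hy, hg]

theorem sub_id_apply_single_sub_single {k R : Type*} [Ring k] {h : R → R}
    (hh : Function.Involutive h) {T : (R →₀ k) →ₗ[k] (R →₀ k)} {F : R → R →₀ k}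
    (hT : ∀ u, T (single u 1) = F u - single (h u) 1) (t : R) :
    (T - LinearMap.id : (R →₀ k) →ₗ[k] (R →₀ k)) (single t 1 - single (h t) 1) =
      F t - F (h t) := by
  simp only [LinearMap.sub_apply, LinearMap.id_apply, map_sub, hT, hh t]
  abel

noncomputable def fibreSum {R X : Type*} [Fintype R] [DecidableEq X] (f : R → X) (x : X) :
    R →₀ ℤ :=
  ∑ s ∈ Finset.univ.filter fun s => f s = x, single s 1

theorem sub_id_apply_plaquette {R X : Type*} [Fintype R] [DecidableEq X] {h v : R → R}
    (hh : Function.Involutive h) (hcomm : ∀ t, h (v t) = v (h t)) {f : R → X} {bar : X → X}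
    (hf : ∀ t, f (v t) = bar (f t)) {T : (R →₀ ℤ) →ₗ[ℤ] (R →₀ ℤ)}
    (hT : ∀ u, T (single u 1) = fibreSum f (f (h u)) - single (h u) 1)
    {φ : (R →₀ ℤ) →ₗ[ℤ] (R →₀ ℤ)}
    (hφ : ∀ t, φ (single t 1) = single t 1 - single (v t) 1 - single (h t) 1 + single (h (v t)) 1)
    (t : R) :
    (T - LinearMap.id : (R →₀ ℤ) →ₗ[ℤ] (R →₀ ℤ)) (φ (single t 1)) =
      fibreSum f (f (h t)) - fibreSum f (bar (f (h t))) -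
        (fibreSum f (f t) - fibreSum f (bar (f t))) := by
  rw [hφ, show single t 1 - single (v t) 1 - single (h t) 1 + single (h (v t)) 1 =
      (single t 1 - single (h t) 1) - (single (v t) 1 - single (h (v t)) (1 : ℤ)) by abel,
    map_sub, sub_id_apply_single_sub_single hh hT, sub_id_apply_single_sub_single hh hT,
    hh t, hh (v t), hcomm, hf, hf]
  abel

theorem stmt_3_general
    {R A B : Type*} [Fintype R]
    [DecidableEq A] [DecidableEq B]
    (a : R → A) (b : R → B) (h v : R → R)
    (hh : ∀ t, h (h t) = t) (hv : ∀ t, v (v t) = t)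
    (hcomm : ∀ t, h (v t) = v (h t))
    -- the transition operators T₁, T₂
    (T₁ T₂ : (R →₀ ℤ) →ₗ[ℤ] (R →₀ ℤ))
    (hT₁ : ∀ t : R, T₁ (single t 1) =
      (∑ s ∈ Finset.univ.filter fun s => b s = b (h t), single s (1 : ℤ)) - single (h t) 1)
    (hT₂ : ∀ t : R, T₂ (single t 1) =
      (∑ s ∈ Finset.univ.filter fun s => a s = a (v t), single s (1 : ℤ)) - single (v t) 1)
    -- the map φ₂
    (φ₂ : (R →₀ ℤ) →ₗ[ℤ] (R →₀ ℤ))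
    (hφ₂ : ∀ t : R, φ₂ (single t 1) =
      single t 1 - single (v t) 1 - single (h t) 1 + single (h (v t)) 1)
    -- involutions without fixed points on A and B, compatible with a, b, h, v
    (barA : A → A) (barB : B → B)
    (hbarA : ∀ x, barA (barA x) = x) (hbarB : ∀ x, barB (barB x) = x)
    (hah : ∀ t, a (h t) = barA (a t)) (hbv : ∀ t, b (v t) = barB (b t))
    -- the map φ₁ : ℤE → ℤR × ℤR
    (φ₁ : ((A →₀ ℤ) × (B →₀ ℤ)) →ₗ[ℤ] ((R →₀ ℤ) × (R →₀ ℤ)))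
    (hφ₁A : ∀ α : A, φ₁ (single α 1, 0) =
      (0, (∑ s ∈ Finset.univ.filter fun s => a s = barA α, single s (1 : ℤ)) -
        ∑ s ∈ Finset.univ.filter fun s => a s = α, single s (1 : ℤ)))
    (hφ₁B : ∀ β : B, φ₁ (0, single β 1) =
      ((∑ s ∈ Finset.univ.filter fun s => b s = β, single s (1 : ℤ)) -
        ∑ s ∈ Finset.univ.filter fun s => b s = barB β, single s (1 : ℤ), 0))
    -- orientations A⁺, B⁺ and the map ε
    (Aplus : Set A) (Bplus : Set B)
    (hAplus : ∀ x : A, ∃! y, y ∈ Aplus ∧ (y = x ∨ y = barA x))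
    (hBplus : ∀ x : B, ∃! y, y ∈ Bplus ∧ (y = x ∨ y = barB x))
    (ε : ((A →₀ ℤ) × (B →₀ ℤ)) →ₗ[ℤ] ((A →₀ ℤ) × (B →₀ ℤ)))
    (hεA : ∀ α ∈ Aplus, ε (single α 1, 0) = (single α 1, 0))
    (hεA' : ∀ α ∈ Aplus, ε (single (barA α) 1, 0) = -(single α 1, 0))
    (hεB : ∀ β ∈ Bplus, ε (0, single β 1) = (0, single β 1))
    (hεB' : ∀ β ∈ Bplus, ε (0, single (barB β) 1) = -(0, single β 1))
    -- the boundary map ∂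
    (bd : (R →₀ ℤ) →ₗ[ℤ] ((A →₀ ℤ) × (B →₀ ℤ)))
    (hbd : ∀ t : R, bd (single t 1) =
      ε ((single (a t) 1, 0) + (0, single (b (h t)) 1)
        - (single (a (v t)) 1, 0) - (0, single (b t) 1))) :
    (∀ t : R, φ₁ (bd (single t 1)) =
      ((T₁ - LinearMap.id : (R →₀ ℤ) →ₗ[ℤ] (R →₀ ℤ)) (φ₂ (single t 1)),
       (T₂ - LinearMap.id : (R →₀ ℤ) →ₗ[ℤ] (R →₀ ℤ)) (φ₂ (single t 1)))) ∧
    φ₁ ∘ₗ bd =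
      LinearMap.prod ((T₁ - LinearMap.id) ∘ₗ φ₂) ((T₂ - LinearMap.id) ∘ₗ φ₂) := by
  have hφ₁εA : ∀ α, φ₁ (ε (single α 1, 0)) = φ₁ (single α 1, 0) :=
    eq_of_eqOn_orientation hbarA (fun x => (hAplus x).exists)
      (fun α => by rw [hφ₁A, hφ₁A, hbarA, Prod.neg_mk, neg_sub, neg_zero])
      (fun y hy => by rw [hεA y hy]) (fun y hy => by rw [hεA' y hy, map_neg])
  have hφ₁εB : ∀ β, φ₁ (ε (0, single β 1)) = φ₁ (0, single β 1) :=
    eq_of_eqOn_orientation hbarB (fun x => (hBplus x).exists)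
      (fun β => by rw [hφ₁B, hφ₁B, hbarB, Prod.neg_mk, neg_sub, neg_zero])
      (fun y hy => by rw [hεB y hy]) (fun y hy => by rw [hεB' y hy, map_neg])
  have hφ₂' : ∀ t, φ₂ (single t 1) =
      single t 1 - single (h t) 1 - single (v t) 1 + single (v (h t)) 1 := fun t => by
    rw [hφ₂, hcomm]; abel
  have square : ∀ t : R, φ₁ (bd (single t 1)) =
      ((T₁ - LinearMap.id : (R →₀ ℤ) →ₗ[ℤ] (R →₀ ℤ)) (φ₂ (single t 1)),
       (T₂ - LinearMap.id : (R →₀ ℤ) →ₗ[ℤ] (R →₀ ℤ)) (φ₂ (single t 1))) := fun t => by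
    rw [sub_id_apply_plaquette hh hcomm hbv hT₁ hφ₂,
      sub_id_apply_plaquette hv (fun t => (hcomm t).symm) hah hT₂ hφ₂', hbd]
    simp only [map_add, map_sub, hφ₁εA, hφ₁εB, hφ₁A, hφ₁B, fibreSum, Prod.ext_iff,
      Prod.fst_add, Prod.fst_sub, Prod.snd_add, Prod.snd_sub]
    constructor <;> abel
  exact ⟨square, Finsupp.lhom_ext' fun t => LinearMap.ext_ring (by simpa using square t)⟩

/-- **Commutativity of the diagram (Lemma in Section 4).**
For the tiling system of a finite VH-T square complex, the diagram
`φ₁ ∘ ∂ = ((T₁ − id) ∘ φ₂, (T₂ − id) ∘ φ₂)` commutes. -/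
theorem stmt_3
    {R A B : Type*} [Fintype R] [Fintype A] [Fintype B]
    [DecidableEq R] [DecidableEq A] [DecidableEq B]
    (a : R → A) (b : R → B) (h v : R → R)
    (hh : ∀ t, h (h t) = t) (hv : ∀ t, v (v t) = t)
    (hcomm : ∀ t, h (v t) = v (h t))
    -- the transition operators T₁, T₂
    (T₁ T₂ : (R →₀ ℤ) →ₗ[ℤ] (R →₀ ℤ))
    (hT₁ : ∀ t : R, T₁ (single t 1) =
      (∑ s ∈ Finset.univ.filter fun s => b s = b (h t), single s (1 : ℤ)) - single (h t) 1)
    (hT₂ : ∀ t : R, T₂ (single t 1) =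
      (∑ s ∈ Finset.univ.filter fun s => a s = a (v t), single s (1 : ℤ)) - single (v t) 1)
    -- the map φ₂
    (φ₂ : (R →₀ ℤ) →ₗ[ℤ] (R →₀ ℤ))
    (hφ₂ : ∀ t : R, φ₂ (single t 1) =
      single t 1 - single (v t) 1 - single (h t) 1 + single (h (v t)) 1)
    -- involutions without fixed points on A and B, compatible with a, b, h, v
    (barA : A → A) (barB : B → B)
    (hbarA : ∀ x, barA (barA x) = x) (hbarB : ∀ x, barB (barB x) = x)
    (hbarAfix : ∀ x, barA x ≠ x) (hbarBfix : ∀ x, barB x ≠ x)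
    (hah : ∀ t, a (h t) = barA (a t)) (hbv : ∀ t, b (v t) = barB (b t))
    -- the map φ₁ : ℤE → ℤR × ℤR
    (φ₁ : ((A →₀ ℤ) × (B →₀ ℤ)) →ₗ[ℤ] ((R →₀ ℤ) × (R →₀ ℤ)))
    (hφ₁A : ∀ α : A, φ₁ (single α 1, 0) =
      (0, (∑ s ∈ Finset.univ.filter fun s => a s = barA α, single s (1 : ℤ)) -
        ∑ s ∈ Finset.univ.filter fun s => a s = α, single s (1 : ℤ)))
    (hφ₁B : ∀ β : B, φ₁ (0, single β 1) =
      ((∑ s ∈ Finset.univ.filter fun s => b s = β, single s (1 : ℤ)) -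
        ∑ s ∈ Finset.univ.filter fun s => b s = barB β, single s (1 : ℤ), 0))
    -- orientations A⁺, B⁺ and the map ε
    (Aplus : Set A) (Bplus : Set B)
    (hAplus : ∀ x : A, ∃! y, y ∈ Aplus ∧ (y = x ∨ y = barA x))
    (hBplus : ∀ x : B, ∃! y, y ∈ Bplus ∧ (y = x ∨ y = barB x))
    (ε : ((A →₀ ℤ) × (B →₀ ℤ)) →ₗ[ℤ] ((A →₀ ℤ) × (B →₀ ℤ)))
    (hεA : ∀ α ∈ Aplus, ε (single α 1, 0) = (single α 1, 0))
    (hεA' : ∀ α ∈ Aplus, ε (single (barA α) 1, 0) = -(single α 1, 0))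
    (hεB : ∀ β ∈ Bplus, ε (0, single β 1) = (0, single β 1))
    (hεB' : ∀ β ∈ Bplus, ε (0, single (barB β) 1) = -(0, single β 1))
    -- the boundary map ∂
    (bd : (R →₀ ℤ) →ₗ[ℤ] ((A →₀ ℤ) × (B →₀ ℤ)))
    (hbd : ∀ t : R, bd (single t 1) =
      ε ((single (a t) 1, 0) + (0, single (b (h t)) 1)
        - (single (a (v t)) 1, 0) - (0, single (b t) 1))) :
    (∀ t : R, φ₁ (bd (single t 1)) =
      ((T₁ - LinearMap.id : (R →₀ ℤ) →ₗ[ℤ] (R →₀ ℤ)) (φ₂ (single t 1)),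
       (T₂ - LinearMap.id : (R →₀ ℤ) →ₗ[ℤ] (R →₀ ℤ)) (φ₂ (single t 1)))) ∧
    φ₁ ∘ₗ bd =
      LinearMap.prod ((T₁ - LinearMap.id) ∘ₗ φ₂) ((T₂ - LinearMap.id) ∘ₗ φ₂) :=
  stmt_3_general a b h v hh hv hcomm T₁ T₂ hT₁ hT₂ φ₂ hφ₂ barA barB hbarA hbarB hah hbv φ₁ hφ₁A hφ₁B
    Aplus Bplus hAplus hBplus ε hεA hεA' hεB hεB' bd hbd
end

section
/- Let R, A, B, a, b, h, v, T₁, T₂ be as in the context, with h, v and h∘v having no fixed points. Assume that for every α ∈ A the fiber {s ∈ R : a(s) = α} has at least 3 elements and for every β ∈ B the fiber {s ∈ R : b(s) = β} has at least 3 elements. If λ ∈ ℤR satisfies (T₁ − id) λ = 0 and (T₂ − id) λ = 0, then for every s ∈ R one has λ(h s) = −λ(s), λ(v s) = −λ(s), and λ(h(v s)) = λ(s). -/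
/-!
Put `f := λ ∘ h` and let `F β` be the sum of `f` over the fiber `b⁻¹ β`, of size `n_β`. The
equation `T₁ λ = λ` reads `f + f ∘ h = F ∘ b`. As `h` permutes `R`, `Σ (f ∘ h)² = Σ f²`; expanding
`f ∘ h = F ∘ b - f` gives `Σ_s F(b s)² = 2 Σ_s F(b s) f(s)`, that is `Σ_β (n_β - 2) F_β² = 0`.
Since every `n_β ≥ 3`, all `F_β` vanish, so `λ ∘ h = -λ`. The same argument applied to `T₂`
gives `λ ∘ v = -λ`.
-/

open Finsupp

section

open Finset

variable {R B K : Type*} [Fintype R] [DecidableEq B]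

def fiberSum [AddCommMonoid K] (b : R → B) (f : R → K) (β : B) : K :=
  ∑ u ∈ univ.filter (fun u => b u = β), f u

lemma fiberSum_comp [CommSemiring K] (b : R → B) (φ : B → K) (β : B) :
    fiberSum b (φ ∘ b) β = #(univ.filter fun s => b s = β) * φ β := by
  rw [fiberSum, ← nsmul_eq_mul, ← sum_const]
  exact sum_congr rfl fun s hs => by rw [Function.comp_apply, (mem_filter.mp hs).2]

lemma sum_comp_mul_eq_sum_mul_fiberSum [Fintype B] [CommSemiring K] (b : R → B) (φ : B → K)
    (f : R → K) : ∑ s, φ (b s) * f s = ∑ β, φ β * fiberSum b f β := by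
  rw [← sum_fiberwise univ b]
  refine sum_congr rfl fun β _ => ?_
  rw [fiberSum, Finset.mul_sum]
  exact sum_congr rfl fun s hs => by rw [(mem_filter.mp hs).2]

lemma fiberSum_eq_zero_of_add_comp_eq_fiberSum [Fintype B] [CommRing K] [LinearOrder K]
    [IsStrictOrderedRing K] (b : R → B) {h : R → R} (hh : Function.Involutive h)
    (hfib : ∀ β, 3 ≤ #(univ.filter fun s => b s = β))
    {f : R → K} (hf : ∀ s, f s + f (h s) = fiberSum b f (b s)) (β : B) :
    fiberSum b f β = 0 := by
  set F := fiberSum b f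
  set n : B → K := fun β => (#(univ.filter fun s => b s = β) : K)
  have hsq : ∑ s, f (h s) ^ 2 = ∑ s, f s ^ 2 := Equiv.sum_comp hh.toPerm (fun s => f s ^ 2)
  have hexpand : ∀ s, f (h s) ^ 2 = F (b s) * (F ∘ b) s - 2 * (F (b s) * f s) + f s ^ 2 := by
    intro s
    rw [Function.comp_apply, ← hf s]
    ring
  simp only [hexpand, sum_add_distrib, sum_sub_distrib, ← Finset.mul_sum] at hsq
  rw [sum_comp_mul_eq_sum_mul_fiberSum b F (F ∘ b), sum_comp_mul_eq_sum_mul_fiberSum b F f] at hsq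
  simp only [fiberSum_comp] at hsq
  have hzero : ∑ β, (n β - 2) * F β ^ 2 = 0 := by
    calc ∑ β, (n β - 2) * F β ^ 2 = ∑ β, F β * (n β * F β) - 2 * ∑ β, F β * F β := by
          rw [Finset.mul_sum, ← sum_sub_distrib]
          exact sum_congr rfl fun β _ => by ring
      _ = 0 := by linarith
  have hpos : ∀ β, 0 < n β - 2 := fun β => by
    have : (3 : K) ≤ n β := Nat.ofNat_le_cast.mpr (hfib β)
    linarith
  have hterm := (sum_eq_zero_iff_of_nonneg fun β _ => by
    have := hpos β; positivity).mp hzero β (mem_univ β)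
  exact pow_eq_zero_iff two_ne_zero |>.mp ((mul_eq_zero.mp hterm).resolve_left (hpos β).ne')

lemma transition_apply [CommRing K] (b : R → B) {h : R → R} (hh : Function.Involutive h)
    {T : (R →₀ K) →ₗ[K] (R →₀ K)}
    (hT : ∀ t, T (single t 1) =
      (∑ s ∈ univ.filter fun s => b s = b (h t), single s (1 : K)) - single (h t) 1)
    (lam : R →₀ K) (s : R) :
    T lam s = fiberSum b (lam ∘ h) (b s) - lam (h s) := by
  classical
  have hsingle : ∀ t, T (single t 1) s =
      (if b (h t) = b s then 1 else 0) - if h t = s then 1 else 0 := by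
    intro t
    simp [hT, single_apply, eq_comm]
  have hexpand : T lam = ∑ t, lam t • T (single t 1) := by
    conv_lhs => rw [← Finsupp.univ_sum_single lam]
    rw [map_sum]
    exact sum_congr rfl fun t _ => by rw [← smul_single_one, map_smul]
  rw [hexpand, Finsupp.finsetSum_apply, ← Equiv.sum_comp hh.toPerm]
  simp only [Function.Involutive.coe_toPerm, Finsupp.smul_apply, smul_eq_mul, hsingle, hh _,
    mul_sub, sum_sub_distrib, mul_ite, mul_one, mul_zero, Finset.sum_ite_eq', mem_univ, if_true,
    fiberSum, sum_filter, Function.comp_apply]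

lemma apply_eq_neg_of_transition_fixed [Fintype B] [CommRing K] [LinearOrder K]
    [IsStrictOrderedRing K] (b : R → B) {h : R → R} (hh : Function.Involutive h)
    (hfib : ∀ β, 3 ≤ #(univ.filter fun s => b s = β)) {T : (R →₀ K) →ₗ[K] (R →₀ K)}
    (hT : ∀ t, T (single t 1) =
      (∑ s ∈ univ.filter fun s => b s = b (h t), single s (1 : K)) - single (h t) 1)
    {lam : R →₀ K} (hlam : T lam = lam) (s : R) :
    lam (h s) = -lam s := by
  have hf : ∀ s, (lam ∘ h) s + (lam ∘ h) (h s) = fiberSum b (lam ∘ h) (b s) := fun s => by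
    have := transition_apply b hh hT lam s
    rw [hlam] at this
    rw [Function.comp_apply, Function.comp_apply, hh s]
    linear_combination this
  have := hf s
  rw [fiberSum_eq_zero_of_add_comp_eq_fiberSum b hh hfib hf, Function.comp_apply,
    Function.comp_apply, hh s] at this
  linear_combination this

end

theorem stmt_6_general
    {R A B : Type*} [Fintype R] [Fintype A] [Fintype B]
    [DecidableEq A] [DecidableEq B]
    (a : R → A) (b : R → B) (h v : R → R)
    (hh : ∀ t, h (h t) = t) (hv : ∀ t, v (v t) = t)
    (T₁ T₂ : (R →₀ ℤ) →ₗ[ℤ] (R →₀ ℤ))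
    (hT₁ : ∀ t : R, T₁ (single t 1) =
      (∑ s ∈ Finset.univ.filter fun s => b s = b (h t), single s (1 : ℤ)) - single (h t) 1)
    (hT₂ : ∀ t : R, T₂ (single t 1) =
      (∑ s ∈ Finset.univ.filter fun s => a s = a (v t), single s (1 : ℤ)) - single (v t) 1)
    (hafib : ∀ α : A, 3 ≤ (Finset.univ.filter fun s => a s = α).card)
    (hbfib : ∀ β : B, 3 ≤ (Finset.univ.filter fun s => b s = β).card)
    (lam : R →₀ ℤ)
    (h₁ : (T₁ - LinearMap.id : (R →₀ ℤ) →ₗ[ℤ] (R →₀ ℤ)) lam = 0)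
    (h₂ : (T₂ - LinearMap.id : (R →₀ ℤ) →ₗ[ℤ] (R →₀ ℤ)) lam = 0) :
    ∀ s : R, lam (h s) = -lam s ∧ lam (v s) = -lam s ∧ lam (h (v s)) = lam s := by
  rw [LinearMap.sub_apply, LinearMap.id_apply, sub_eq_zero] at h₁ h₂
  have hH := apply_eq_neg_of_transition_fixed b hh hbfib hT₁ h₁
  have hV := apply_eq_neg_of_transition_fixed a hv hafib hT₂ h₂
  intro s
  exact ⟨hH s, hV s, by rw [hH, hV, neg_neg]⟩

/-- **Antisymmetry of coefficients (equations (8)–(10) of the paper):**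
if `λ` is killed by `T₁ − id` and `T₂ − id` and all fibers of `a` and `b`
have at least three elements, then `λ(h s) = −λ(s)`, `λ(v s) = −λ(s)` and
`λ(h(v s)) = λ(s)` for every `s`. -/
theorem stmt_6
    {R A B : Type*} [Fintype R] [Fintype A] [Fintype B]
    [DecidableEq R] [DecidableEq A] [DecidableEq B]
    (a : R → A) (b : R → B) (h v : R → R)
    (hh : ∀ t, h (h t) = t) (hv : ∀ t, v (v t) = t)
    (hcomm : ∀ t, h (v t) = v (h t))
    (hfix : ∀ t, h t ≠ t) (vfix : ∀ t, v t ≠ t) (hvfix : ∀ t, h (v t) ≠ t)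
    (T₁ T₂ : (R →₀ ℤ) →ₗ[ℤ] (R →₀ ℤ))
    (hT₁ : ∀ t : R, T₁ (single t 1) =
      (∑ s ∈ Finset.univ.filter fun s => b s = b (h t), single s (1 : ℤ)) - single (h t) 1)
    (hT₂ : ∀ t : R, T₂ (single t 1) =
      (∑ s ∈ Finset.univ.filter fun s => a s = a (v t), single s (1 : ℤ)) - single (v t) 1)
    (hafib : ∀ α : A, 3 ≤ (Finset.univ.filter fun s => a s = α).card)
    (hbfib : ∀ β : B, 3 ≤ (Finset.univ.filter fun s => b s = β).card)
    (lam : R →₀ ℤ)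
    (h₁ : (T₁ - LinearMap.id : (R →₀ ℤ) →ₗ[ℤ] (R →₀ ℤ)) lam = 0)
    (h₂ : (T₂ - LinearMap.id : (R →₀ ℤ) →ₗ[ℤ] (R →₀ ℤ)) lam = 0) :
    ∀ s : R, lam (h s) = -lam s ∧ lam (v s) = -lam s ∧ lam (h (v s)) = lam s :=
  stmt_6_general a b h v hh hv T₁ T₂ hT₁ hT₂ hafib hbfib lam h₁ h₂
end

section
/- Let R, B, b, h, v, T₁ and φ₂ be as in the context, where B carries an involution x ↦ x̄ satisfying b(v t) = (b t)̄ for all t ∈ R. Then for every t ∈ R: (T₁ − id)(φ₂ δ_t) = (Σ_{s : b(s) = b(h t)} δ_s − Σ_{s : b(s) = (b(h t))̄} δ_s) − (Σ_{s : b(s) = b(t)} δ_s − Σ_{s : b(s) = (b(t))̄} δ_s). -/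
open Finsupp

theorem stmt_8_general
    {R B : Type*} [Fintype R]
    [DecidableEq B]
    (b : R → B) (h v : R → R)
    (hh : ∀ t, h (h t) = t)
    (hcomm : ∀ t, h (v t) = v (h t))
    (T₁ : (R →₀ ℤ) →ₗ[ℤ] (R →₀ ℤ))
    (hT₁ : ∀ t : R, T₁ (single t 1) =
      (∑ s ∈ Finset.univ.filter fun s => b s = b (h t), single s (1 : ℤ)) - single (h t) 1)
    (φ₂ : (R →₀ ℤ) →ₗ[ℤ] (R →₀ ℤ))
    (hφ₂ : ∀ t : R, φ₂ (single t 1) =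
      single t 1 - single (v t) 1 - single (h t) 1 + single (h (v t)) 1)
    (barB : B → B)
    (hbv : ∀ t, b (v t) = barB (b t)) :
    ∀ t : R, (T₁ - LinearMap.id : (R →₀ ℤ) →ₗ[ℤ] (R →₀ ℤ)) (φ₂ (single t 1)) =
      ((∑ s ∈ Finset.univ.filter fun s => b s = b (h t), single s (1 : ℤ)) -
        ∑ s ∈ Finset.univ.filter fun s => b s = barB (b (h t)), single s (1 : ℤ)) -
      ((∑ s ∈ Finset.univ.filter fun s => b s = b t, single s (1 : ℤ)) -
        ∑ s ∈ Finset.univ.filter fun s => b s = barB (b t), single s (1 : ℤ)) := by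
  intro t
  -- After expanding, the `-δ_{h s}` parts of `T₁ δ_s` cancel against `-id (φ₂ δ_t)`.
  simp only [LinearMap.sub_apply, LinearMap.id_apply, hφ₂, map_sub, map_add, hT₁, hh,
    hcomm, hbv]
  abel

/-- **Key computation in the commutative diagram lemma:** for every `t`,
`(T₁ − id)(φ₂ δ_t)` equals the signed sum of fibers of `b` over
`b(h t)`, its bar, `b(t)` and its bar. -/
theorem stmt_8
    {R B : Type*} [Fintype R] [Fintype B]
    [DecidableEq R] [DecidableEq B]
    (b : R → B) (h v : R → R)
    (hh : ∀ t, h (h t) = t) (hv : ∀ t, v (v t) = t)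
    (hcomm : ∀ t, h (v t) = v (h t))
    (T₁ : (R →₀ ℤ) →ₗ[ℤ] (R →₀ ℤ))
    (hT₁ : ∀ t : R, T₁ (single t 1) =
      (∑ s ∈ Finset.univ.filter fun s => b s = b (h t), single s (1 : ℤ)) - single (h t) 1)
    (φ₂ : (R →₀ ℤ) →ₗ[ℤ] (R →₀ ℤ))
    (hφ₂ : ∀ t : R, φ₂ (single t 1) =
      single t 1 - single (v t) 1 - single (h t) 1 + single (h (v t)) 1)
    (barB : B → B) (hbarB : ∀ x, barB (barB x) = x)
    (hbv : ∀ t, b (v t) = barB (b t)) :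
    ∀ t : R, (T₁ - LinearMap.id : (R →₀ ℤ) →ₗ[ℤ] (R →₀ ℤ)) (φ₂ (single t 1)) =
      ((∑ s ∈ Finset.univ.filter fun s => b s = b (h t), single s (1 : ℤ)) -
        ∑ s ∈ Finset.univ.filter fun s => b s = barB (b (h t)), single s (1 : ℤ)) -
      ((∑ s ∈ Finset.univ.filter fun s => b s = b t, single s (1 : ℤ)) -
        ∑ s ∈ Finset.univ.filter fun s => b s = barB (b t), single s (1 : ℤ)) :=
  stmt_8_general b h v hh hcomm T₁ hT₁ φ₂ hφ₂ barB hbv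
end

section
/- Let R and B be finite types, b : R → B a function, and h : R → R an involution without fixed points. Assume that for every β in the range of b, the fiber {t ∈ R : b(t) = β} has at least 3 elements. If λ : R → ℤ satisfies λ(s) + λ(h s) = Σ_{t : b(h t) = b(s)} λ(t) for every s ∈ R, then λ(s) + λ(h s) = 0 for every s ∈ R. -/
/-!
Write `T β` for the sum of `λ` over the darts `t` with `b (h t) = β`, so the hypothesis reads
`λ s + λ (h s) = T (b s)`; in particular `T (b s) = T (b (h s))`. Evaluating `∑ s, T (b s) ^ 2`
once fibre by fibre and once by expanding `T (b s) = λ s + λ (h s)` and reindexing along `h`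
gives `∑ β, n_β T β ^ 2 = 2 ∑ β, T β ^ 2` over the range of `b`, where `n_β ≥ 3` is the fibre size.
Hence `∑ β, (n_β - 2) T β ^ 2 = 0` forces `T = 0` on the range of `b`.
-/

open Finset

section IncomingSum

variable {R B α : Type*} [Fintype R] [DecidableEq B]

def incomingSum [AddCommMonoid α] (b : R → B) (h : R → R) (lam : R → α) (β : B) : α :=
  ∑ t ∈ univ.filter fun t => b (h t) = β, lam t

variable (b : R → B) (h : R → R)

theorem sum_mul_comp_eq_sum_incomingSum_mul [NonUnitalNonAssocSemiring α] (lam : R → α) (g : B → α) :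
    ∑ s, lam s * g (b (h s)) = ∑ β ∈ univ.image b, incomingSum b h lam β * g β := by
  rw [← sum_fiberwise_of_maps_to (g := fun s => b (h s)) (t := univ.image b)
    (fun s _ => mem_image_of_mem b (mem_univ _))]
  refine sum_congr rfl fun β _ => ?_
  rw [incomingSum, sum_mul]
  exact sum_congr rfl fun s hs => by rw [(mem_filter.1 hs).2]

variable [CommRing α] {lam : R → α} (hh : Function.Involutive h)
  (hlam : ∀ s, lam s + lam (h s) = incomingSum b h lam (b s))
include hh hlam

theorem incomingSum_head_eq_tail (s : R) :
    incomingSum b h lam (b (h s)) = incomingSum b h lam (b s) := by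
  rw [← hlam, ← hlam, hh s, add_comm]

theorem sum_card_fiber_mul_incomingSum_sq :
    ∑ β ∈ univ.image b, (#{t | b t = β} : α) * incomingSum b h lam β ^ 2 =
      2 * ∑ β ∈ univ.image b, incomingSum b h lam β ^ 2 := by
  have hT := incomingSum_head_eq_tail b h hh hlam
  set T := incomingSum b h lam
  have hreindex : ∑ s, lam (h s) * T (b s) = ∑ s, lam s * T (b (h s)) := by
    rw [← hh.bijective.sum_comp (fun s => lam (h s) * T (b s))]
    simp only [hh _]
  calc ∑ β ∈ univ.image b, (#{t | b t = β} : α) * T β ^ 2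
      = ∑ s, T (b s) ^ 2 := by simp only [sum_comp (fun β => T β ^ 2) b, nsmul_eq_mul]
    _ = ∑ s, lam s * T (b (h s)) + ∑ s, lam (h s) * T (b s) := by
        rw [← sum_add_distrib]
        exact sum_congr rfl fun s _ => by rw [hT, ← add_mul, hlam, sq]
    _ = 2 * ∑ β ∈ univ.image b, T β ^ 2 := by
        rw [hreindex, sum_mul_comp_eq_sum_incomingSum_mul b h lam T, ← two_mul]
        simp only [T, sq]

theorem incomingSum_eq_zero [LinearOrder α] [IsStrictOrderedRing α]
    (hdeg : ∀ β ∈ Set.range b, 3 ≤ #{t | b t = β}) (s : R) :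
    incomingSum b h lam (b s) = 0 := by
  have hkey := sum_card_fiber_mul_incomingSum_sq b h hh hlam
  set T := incomingSum b h lam
  have hcoeff : ∀ β ∈ univ.image b, (0 : α) < #{t | b t = β} - 2 := fun β hβ => by
    obtain ⟨t, -, rfl⟩ := mem_image.1 hβ
    have : (3 : α) ≤ #{u | b u = b t} := by exact_mod_cast hdeg _ ⟨t, rfl⟩
    linarith
  have hsum : ∑ β ∈ univ.image b, ((#{t | b t = β} : α) - 2) * T β ^ 2 = 0 := by
    rw [← sub_eq_zero.2 hkey, mul_sum, ← sum_sub_distrib]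
    exact sum_congr rfl fun β _ => by ring
  have hbs : b s ∈ univ.image b := mem_image_of_mem b (mem_univ s)
  have hterm := (sum_eq_zero_iff_of_nonneg fun β hβ =>
    mul_nonneg (hcoeff β hβ).le (sq_nonneg (T β))).1 hsum (b s) hbs
  exact pow_eq_zero_iff two_ne_zero |>.1 ((mul_eq_zero.1 hterm).resolve_left (hcoeff _ hbs).ne')

end IncomingSum

theorem stmt_11_general
    {R B : Type*} [Fintype R] [DecidableEq B]
    (b : R → B) (h : R → R)
    (hh : ∀ t, h (h t) = t)
    (hdeg : ∀ β ∈ Set.range b, 3 ≤ (Finset.univ.filter fun t => b t = β).card)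
    (lam : R → ℤ)
    (hlam : ∀ s : R, lam s + lam (h s) =
      ∑ t ∈ Finset.univ.filter fun t => b (h t) = b s, lam t) :
    ∀ s : R, lam s + lam (h s) = 0 := fun s =>
  (hlam s).trans (incomingSum_eq_zero b h hh hlam hdeg s)

/-- **Vanishing of `μ` (core counting argument of Lemma (connected)):**
if every nonempty fiber of `b` has at least three elements and
`λ(s) + λ(h s) = Σ_{t : b(h t) = b(s)} λ(t)` for all `s`, then
`λ(s) + λ(h s) = 0` for all `s`. -/
theorem stmt_11
    {R B : Type*} [Fintype R] [Fintype B] [DecidableEq B]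
    (b : R → B) (h : R → R)
    (hh : ∀ t, h (h t) = t) (hfix : ∀ t, h t ≠ t)
    (hdeg : ∀ β ∈ Set.range b, 3 ≤ (Finset.univ.filter fun t => b t = β).card)
    (lam : R → ℤ)
    (hlam : ∀ s : R, lam s + lam (h s) =
      ∑ t ∈ Finset.univ.filter fun t => b (h t) = b s, lam t) :
    ∀ s : R, lam s + lam (h s) = 0 :=
  stmt_11_general b h hh hdeg lam hlam
end
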